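/- arXiv:2107.11841 — 2 statements merged into one kernel-verified Lean document; each statement's English description precedes it below -/
import Mathlib

section
/- Every HyperQPTL_K formula (HyperQPTL extended with the epistemic knowledge operator K_{A,π}) can be translated into an equivalent HyperQPTL formula: specifically, an occurrence of K_{A,π}ψ can be replaced by an existentially quantified proposition u together with the constraint ∀r. ∀π'. ((r U (u ∧ r ∧ X G ¬r)) ∧ G (r → A_π = A_{π'}) → G (r ∧ X ¬r → ψ[π'/π])), and the resulting HyperQPTL formula is satisfied by exactly the same sets of traces as the original HyperQPTL_K formula. -/
/-!
STATEMENT 9: Every HyperQPTL_K formula (HyperQPTL extended with the epistemic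
knowledge operator K_{A,π}) can be translated into an equivalent HyperQPTL
formula: the resulting HyperQPTL formula is satisfied by exactly the same
sets of traces as the original HyperQPTL_K formula (an occurrence of K_{A,π}ψ
can be replaced by an existentially quantified proposition u together with the
constraint ∀r. ∀π'. ((r U (u ∧ r ∧ X G ¬r)) ∧ G (r → A_π = A_{π'}) →
G (r ∧ X ¬r → ψ[π'/π]))).
-/

/-- A trace over the atomic propositions (drawn from `ℕ`). -/
abbrev Trace : Type := ℕ → Set ℕ

/-! ### HyperQPTL -/

/-- Quantifier-free HyperQPTL formulas: `a_π | q | ¬ψ | ψ ∧ ψ | X ψ | ψ U ψ`. -/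
inductive QF : Type
  | atom : ℕ → ℕ → QF
  | patom : ℕ → QF
  | not : QF → QF
  | and : QF → QF → QF
  | next : QF → QF
  | xuntil : QF → QF → QF

/-- Satisfaction of a quantifier-free HyperQPTL formula. -/
def QF.Sat (Pi : ℕ → Trace) (σ : ℕ → Set ℕ) : ℕ → QF → Prop
  | i, .atom a π => a ∈ Pi π i
  | i, .patom q => i ∈ σ q
  | i, .not ψ => ¬ QF.Sat Pi σ i ψ
  | i, .and ψ₁ ψ₂ => QF.Sat Pi σ i ψ₁ ∧ QF.Sat Pi σ i ψ₂
  | i, .next ψ => QF.Sat Pi σ (i + 1) ψ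
  | i, .xuntil ψ₁ ψ₂ =>
      ∃ k, i ≤ k ∧ QF.Sat Pi σ k ψ₂ ∧ ∀ j, i ≤ j → j < k → QF.Sat Pi σ j ψ₁

/-- Trace variables of a quantifier-free formula. -/
def QF.tvars : QF → Finset ℕ
  | .atom _ π => {π}
  | .patom _ => ∅
  | .not ψ => ψ.tvars
  | .and ψ₁ ψ₂ => ψ₁.tvars ∪ ψ₂.tvars
  | .next ψ => ψ.tvars
  | .xuntil ψ₁ ψ₂ => ψ₁.tvars ∪ ψ₂.tvars

/-- Propositional variables of a quantifier-free formula. -/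
def QF.pvars : QF → Finset ℕ
  | .atom _ _ => ∅
  | .patom q => {q}
  | .not ψ => ψ.pvars
  | .and ψ₁ ψ₂ => ψ₁.pvars ∪ ψ₂.pvars
  | .next ψ => ψ.pvars
  | .xuntil ψ₁ ψ₂ => ψ₁.pvars ∪ ψ₂.pvars

/-- HyperQPTL formulas. -/
inductive HyperQPTL : Type
  | qf : QF → HyperQPTL
  | ex : ℕ → HyperQPTL → HyperQPTL
  | all : ℕ → HyperQPTL → HyperQPTL
  | pex : ℕ → HyperQPTL → HyperQPTL
  | pall : ℕ → HyperQPTL → HyperQPTL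

/-- Satisfaction `T, Π, i ⊨ φ` of a HyperQPTL formula. -/
def HyperQPTL.Sat (T : Set Trace) :
    (ℕ → Trace) → (ℕ → Set ℕ) → ℕ → HyperQPTL → Prop
  | Pi, σ, i, .qf ψ => QF.Sat Pi σ i ψ
  | Pi, σ, i, .ex π φ => ∃ t ∈ T, HyperQPTL.Sat T (Function.update Pi π t) σ i φ
  | Pi, σ, i, .all π φ => ∀ t ∈ T, HyperQPTL.Sat T (Function.update Pi π t) σ i φ
  | Pi, σ, i, .pex q φ =>
      ∃ s : Set ℕ, HyperQPTL.Sat T Pi (Function.update σ q s) i φ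
  | Pi, σ, i, .pall q φ =>
      ∀ s : Set ℕ, HyperQPTL.Sat T Pi (Function.update σ q s) i φ

/-- Free trace variables. -/
def HyperQPTL.freeT : HyperQPTL → Finset ℕ
  | .qf ψ => ψ.tvars
  | .ex π φ => φ.freeT \ {π}
  | .all π φ => φ.freeT \ {π}
  | .pex _ φ => φ.freeT
  | .pall _ φ => φ.freeT

/-- Free propositional variables. -/
def HyperQPTL.freeP : HyperQPTL → Finset ℕ
  | .qf ψ => ψ.pvars
  | .ex _ φ => φ.freeP
  | .all _ φ => φ.freeP
  | .pex q φ => φ.freeP \ {q}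
  | .pall q φ => φ.freeP \ {q}

/-- A HyperQPTL sentence. -/
def HyperQPTL.Closed (φ : HyperQPTL) : Prop := φ.freeT = ∅ ∧ φ.freeP = ∅

/-- `T ⊨ φ` iff `T, ∅, 0 ⊨ φ`. -/
def TSat (T : Set Trace) (φ : HyperQPTL) : Prop :=
  HyperQPTL.Sat T (fun _ _ => (∅ : Set ℕ)) (fun _ => (∅ : Set ℕ)) 0 φ

/-! ### HyperQPTL_K -/

/-- Quantifier-free HyperQPTL_K formulas: HyperQPTL extended with the
knowledge operator `K_{A,π} ψ`. -/
inductive QFK : Type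
  | atom : ℕ → ℕ → QFK
  | patom : ℕ → QFK
  | not : QFK → QFK
  | and : QFK → QFK → QFK
  | next : QFK → QFK
  | xuntil : QFK → QFK → QFK
  | know : Finset ℕ → ℕ → QFK → QFK     -- `K_{A,π} ψ`

/-- Satisfaction of a quantifier-free HyperQPTL_K formula over a set of
traces `T`: `K_{A,π} ψ` holds at position `i` iff for all traces `t' ∈ T`
whose prefix up to `i` agrees with `Π(π)` on all propositions in `A`,
`ψ` holds with `π` remapped to `t'`. -/
def QFK.Sat (T : Set Trace) :
    (ℕ → Trace) → (ℕ → Set ℕ) → ℕ → QFK → Prop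
  | Pi, _, i, .atom a π => a ∈ Pi π i
  | _, σ, i, .patom q => i ∈ σ q
  | Pi, σ, i, .not ψ => ¬ QFK.Sat T Pi σ i ψ
  | Pi, σ, i, .and ψ₁ ψ₂ => QFK.Sat T Pi σ i ψ₁ ∧ QFK.Sat T Pi σ i ψ₂
  | Pi, σ, i, .next ψ => QFK.Sat T Pi σ (i + 1) ψ
  | Pi, σ, i, .xuntil ψ₁ ψ₂ =>
      ∃ k, i ≤ k ∧ QFK.Sat T Pi σ k ψ₂ ∧
        ∀ j, i ≤ j → j < k → QFK.Sat T Pi σ j ψ₁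
  | Pi, σ, i, .know A π ψ =>
      ∀ t' ∈ T, (∀ a ∈ A, ∀ j ≤ i, (a ∈ Pi π j ↔ a ∈ t' j)) →
        QFK.Sat T (Function.update Pi π t') σ i ψ

/-- Trace variables of a quantifier-free HyperQPTL_K formula. -/
def QFK.tvars : QFK → Finset ℕ
  | .atom _ π => {π}
  | .patom _ => ∅
  | .not ψ => ψ.tvars
  | .and ψ₁ ψ₂ => ψ₁.tvars ∪ ψ₂.tvars
  | .next ψ => ψ.tvars
  | .xuntil ψ₁ ψ₂ => ψ₁.tvars ∪ ψ₂.tvars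
  | .know _ π ψ => insert π ψ.tvars

/-- Propositional variables of a quantifier-free HyperQPTL_K formula. -/
def QFK.pvars : QFK → Finset ℕ
  | .atom _ _ => ∅
  | .patom q => {q}
  | .not ψ => ψ.pvars
  | .and ψ₁ ψ₂ => ψ₁.pvars ∪ ψ₂.pvars
  | .next ψ => ψ.pvars
  | .xuntil ψ₁ ψ₂ => ψ₁.pvars ∪ ψ₂.pvars
  | .know _ _ ψ => ψ.pvars

/-- HyperQPTL_K formulas. -/
inductive HyperQPTLK : Type
  | qf : QFK → HyperQPTLK
  | ex : ℕ → HyperQPTLK → HyperQPTLK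
  | all : ℕ → HyperQPTLK → HyperQPTLK
  | pex : ℕ → HyperQPTLK → HyperQPTLK
  | pall : ℕ → HyperQPTLK → HyperQPTLK

/-- Satisfaction `T, Π, i ⊨ φ` of a HyperQPTL_K formula. -/
def HyperQPTLK.Sat (T : Set Trace) :
    (ℕ → Trace) → (ℕ → Set ℕ) → ℕ → HyperQPTLK → Prop
  | Pi, σ, i, .qf ψ => QFK.Sat T Pi σ i ψ
  | Pi, σ, i, .ex π φ => ∃ t ∈ T, HyperQPTLK.Sat T (Function.update Pi π t) σ i φ
  | Pi, σ, i, .all π φ => ∀ t ∈ T, HyperQPTLK.Sat T (Function.update Pi π t) σ i φ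
  | Pi, σ, i, .pex q φ =>
      ∃ s : Set ℕ, HyperQPTLK.Sat T Pi (Function.update σ q s) i φ
  | Pi, σ, i, .pall q φ =>
      ∀ s : Set ℕ, HyperQPTLK.Sat T Pi (Function.update σ q s) i φ

/-- Free trace variables. -/
def HyperQPTLK.freeT : HyperQPTLK → Finset ℕ
  | .qf ψ => ψ.tvars
  | .ex π φ => φ.freeT \ {π}
  | .all π φ => φ.freeT \ {π}
  | .pex _ φ => φ.freeT
  | .pall _ φ => φ.freeT

/-- Free propositional variables. -/
def HyperQPTLK.freeP : HyperQPTLK → Finset ℕ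
  | .qf ψ => ψ.pvars
  | .ex _ φ => φ.freeP
  | .all _ φ => φ.freeP
  | .pex q φ => φ.freeP \ {q}
  | .pall q φ => φ.freeP \ {q}

/-- A HyperQPTL_K sentence. -/
def HyperQPTLK.Closed (φ : HyperQPTLK) : Prop := φ.freeT = ∅ ∧ φ.freeP = ∅

/-- `T ⊨ φ` iff `T, ∅, 0 ⊨ φ`. -/
def TSatK (T : Set Trace) (φ : HyperQPTLK) : Prop :=
  HyperQPTLK.Sat T (fun _ _ => (∅ : Set ℕ)) (fun _ => (∅ : Set ℕ)) 0 φ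

/-!
An outermost occurrence of `K_{A,π} b` in the quantifier-free matrix is replaced by a fresh
proposition `u`, which the prefix `∃u ∀r ∀π₁ ∃π₂` pins down to the set of positions where
`K_{A,π} b` holds: a proposition `r` true exactly on `[0, k]` selects the position `k`, the
paper's constraint on `π₁` forces `K_{A,π} b` at `k` wherever `u` holds, and a dual constraint
with an existential witness `π₂` refutes it wherever `u` fails. The body `b` is copied into
both constraints, so the elimination is iterated along a weight in which each knowledge operator
outweighs all copies of its body. The new trace quantifiers need `T ≠ ∅`; on `T = ∅` a sentence
never reaches its matrix, as all its trace variables are bound by quantifiers over `T`.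
-/

theorem forall_exists_witness_iff_eq_setOf {α : Type*} {T : Set α} (hT : T.Nonempty)
    (Agree B : α → ℕ → Prop) (U : Set ℕ) :
    (∀ R : Set ℕ, ∀ t₁ ∈ T, ∃ t₂ ∈ T,
        (∀ k, R = Set.Iic k → k ∈ U → Agree t₁ k → B t₁ k) ∧
        (∀ k, R = Set.Iic k → k ∉ U → Agree t₂ k ∧ ¬ B t₂ k)) ↔
      U = {k | ∀ t ∈ T, Agree t k → B t k} := by
  constructor
  · intro h
    ext k
    refine ⟨fun hk t ht hag => ?_, fun hK => by_contra fun hk => ?_⟩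
    · obtain ⟨_, _, hpos, _⟩ := h (Set.Iic k) t ht
      exact hpos k rfl hk hag
    · obtain ⟨t₂, ht₂, _, hneg⟩ := h (Set.Iic k) hT.some hT.some_mem
      obtain ⟨hag, hb⟩ := hneg k rfl hk
      exact hb (hK t₂ ht₂ hag)
  · rintro rfl R t₁ ht₁
    obtain ⟨t₂, ht₂, hneg⟩ : ∃ t₂ ∈ T, ∀ k, R = Set.Iic k →
        ¬ (∀ t ∈ T, Agree t k → B t k) → Agree t₂ k ∧ ¬ B t₂ k := by
      by_cases hR : ∃ k, R = Set.Iic k ∧ ¬ ∀ t ∈ T, Agree t k → B t k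
      · obtain ⟨k, rfl, hk⟩ := hR
        push Not at hk
        obtain ⟨t₂, ht₂, hag, hb⟩ := hk
        refine ⟨t₂, ht₂, fun k' hk' _ => ?_⟩
        obtain rfl := Set.Iic_injective hk'
        exact ⟨hag, hb⟩
      · exact ⟨t₁, ht₁, fun k hk hK => absurd ⟨k, hk, hK⟩ hR⟩
    exact ⟨t₂, ht₂, fun k _ hk hag => hk t₁ ht₁ hag, hneg⟩

theorem exists_forall_exists_witness_iff {α : Type*} {T : Set α} (hT : T.Nonempty)
    (Agree B : α → ℕ → Prop) (Q : Set ℕ → Prop) :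
    (∃ U, ∀ R : Set ℕ, ∀ t₁ ∈ T, ∃ t₂ ∈ T,
        ((∀ k, R = Set.Iic k → k ∈ U → Agree t₁ k → B t₁ k) ∧
          (∀ k, R = Set.Iic k → k ∉ U → Agree t₂ k ∧ ¬ B t₂ k)) ∧ Q U) ↔
      Q {k | ∀ t ∈ T, Agree t k → B t k} := by
  constructor
  · rintro ⟨U, hU⟩
    have hQ : Q U := (hU ∅ _ hT.some_mem).choose_spec.2.2
    rwa [(forall_exists_witness_iff_eq_setOf hT Agree B U).1 fun R t₁ ht₁ =>
      (hU R t₁ ht₁).imp fun _ ⟨ht₂, hc, _⟩ => ⟨ht₂, hc⟩] at hQ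
  · intro hQ
    refine ⟨{k | ∀ t ∈ T, Agree t k → B t k}, fun R t₁ ht₁ => ?_⟩
    obtain ⟨t₂, ht₂, hc⟩ := (forall_exists_witness_iff_eq_setOf hT Agree B _).2 rfl R t₁ ht₁
    exact ⟨t₂, ht₂, hc, hQ⟩

namespace QFK

variable {T : Set Trace} {Pi Pi' : ℕ → Trace} {σ σ' : ℕ → Set ℕ} {u r π π₁ π₂ : ℕ}
  {A : Finset ℕ} {b ψ ψh : QFK}

theorem sat_congr (ψ : QFK) (hPi : ∀ v ∈ ψ.tvars, Pi v = Pi' v)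
    (hσ : ∀ q ∈ ψ.pvars, σ q = σ' q) (i : ℕ) :
    QFK.Sat T Pi σ i ψ ↔ QFK.Sat T Pi' σ' i ψ := by
  induction ψ generalizing Pi Pi' i with
  | atom a π => simp_all [QFK.Sat, QFK.tvars]
  | patom q => simp_all [QFK.Sat, QFK.pvars]
  | not ψ ih => exact not_congr (ih hPi hσ i)
  | and ψ₁ ψ₂ ih₁ ih₂ =>
    simp only [QFK.tvars, QFK.pvars, Finset.mem_union] at hPi hσ
    exact and_congr (ih₁ (fun v hv => hPi v (.inl hv)) (fun q hq => hσ q (.inl hq)) i)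
      (ih₂ (fun v hv => hPi v (.inr hv)) (fun q hq => hσ q (.inr hq)) i)
  | next ψ ih => exact ih hPi hσ (i + 1)
  | xuntil ψ₁ ψ₂ ih₁ ih₂ =>
    simp only [QFK.tvars, QFK.pvars, Finset.mem_union] at hPi hσ
    have h₁ := fun j => ih₁ (fun v hv => hPi v (.inl hv)) (fun q hq => hσ q (.inl hq)) j
    have h₂ := fun k => ih₂ (fun v hv => hPi v (.inr hv)) (fun q hq => hσ q (.inr hq)) k
    simp only [QFK.Sat, h₁, h₂]
  | know A π ψ ih =>
    simp only [QFK.tvars, Finset.mem_insert, forall_eq_or_imp] at hPi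
    simp only [QFK.Sat, hPi.1]
    refine forall₂_congr fun t _ => imp_congr_right fun _ => ih (fun v hv => ?_) hσ i
    by_cases hvπ : v = π
    · simp [hvπ]
    · simp [Function.update_of_ne hvπ, hPi.2 v hv]

theorem sat_update_trace (hπ : π ∉ ψ.tvars) (t : Trace) (i : ℕ) :
    QFK.Sat T (Function.update Pi π t) σ i ψ ↔ QFK.Sat T Pi σ i ψ :=
  sat_congr ψ (fun _ hv => Function.update_of_ne (ne_of_mem_of_not_mem hv hπ) _ _)
    (fun _ _ => rfl) i

theorem sat_update_prop {q : ℕ} (hq : q ∉ ψ.pvars) (s : Set ℕ) (i : ℕ) :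
    QFK.Sat T Pi (Function.update σ q s) i ψ ↔ QFK.Sat T Pi σ i ψ :=
  sat_congr ψ (fun _ _ => rfl)
    (fun _ hp => Function.update_of_ne (ne_of_mem_of_not_mem hp hq) _ _) i

def renameT (f : ℕ → ℕ) : QFK → QFK
  | .atom a π => .atom a (f π)
  | .patom q => .patom q
  | .not ψ => .not (ψ.renameT f)
  | .and ψ₁ ψ₂ => .and (ψ₁.renameT f) (ψ₂.renameT f)
  | .next ψ => .next (ψ.renameT f)
  | .xuntil ψ₁ ψ₂ => .xuntil (ψ₁.renameT f) (ψ₂.renameT f)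
  | .know A π ψ => .know A (f π) (ψ.renameT f)

theorem sat_renameT (f : ℕ → ℕ) (ψ : QFK) (hf : Set.InjOn f ψ.tvars) (i : ℕ) :
    QFK.Sat T Pi σ i (ψ.renameT f) ↔ QFK.Sat T (Pi ∘ f) σ i ψ := by
  induction ψ generalizing Pi i with
  | atom a π => rfl
  | patom q => rfl
  | not ψ ih => exact not_congr (ih hf i)
  | and ψ₁ ψ₂ ih₁ ih₂ =>
    simp only [QFK.tvars, Finset.coe_union] at hf
    exact and_congr (ih₁ (hf.mono Set.subset_union_left) i)
      (ih₂ (hf.mono Set.subset_union_right) i)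
  | next ψ ih => exact ih hf (i + 1)
  | xuntil ψ₁ ψ₂ ih₁ ih₂ =>
    simp only [QFK.tvars, Finset.coe_union] at hf
    have h₁ := fun j => ih₁ (Pi := Pi) (hf.mono Set.subset_union_left) j
    have h₂ := fun k => ih₂ (Pi := Pi) (hf.mono Set.subset_union_right) k
    simp only [renameT, QFK.Sat, h₁, h₂]
  | know A π ψ ih =>
    simp only [QFK.tvars, Finset.coe_insert] at hf
    simp only [renameT, QFK.Sat]
    refine forall₂_congr fun t _ => imp_congr_right fun _ => ?_
    rw [ih (hf.mono (Set.subset_insert _ _)) i]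
    refine sat_congr ψ (fun v hv => ?_) (fun _ _ => rfl) i
    by_cases hvπ : v = π
    · simp [hvπ]
    · have : f v ≠ f π := fun h => hvπ (hf (Set.mem_insert_of_mem _ hv) (Set.mem_insert _ _) h)
      simp [Function.update_of_ne hvπ, Function.update_of_ne this]

theorem sat_renameT_update {π' : ℕ} (hπ' : π' ∉ ψ.tvars) (i : ℕ) :
    QFK.Sat T Pi σ i (ψ.renameT (Function.update id π π')) ↔
      QFK.Sat T (Function.update Pi π (Pi π')) σ i ψ := by
  rw [sat_renameT, Function.comp_update, Function.comp_id]
  intro v hv w hw h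
  by_cases hvπ : v = π <;> by_cases hwπ : w = π <;>
    simp_all [Function.update_of_ne]

theorem mem_tvars_renameT {f : ℕ → ℕ} {x : ℕ} (hx : x ∈ (ψ.renameT f).tvars) :
    ∃ v ∈ ψ.tvars, f v = x := by
  induction ψ <;> simp_all [renameT, QFK.tvars] <;> grind

@[simp] theorem pvars_renameT (f : ℕ → ℕ) (ψ : QFK) : (ψ.renameT f).pvars = ψ.pvars := by
  induction ψ <;> simp_all [renameT, QFK.pvars]

def imp (φ ψ : QFK) : QFK := .not (.and φ (.not ψ))

def iff (φ ψ : QFK) : QFK := .and (imp φ ψ) (imp ψ φ)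

/-- `G φ` as `¬(φ U ¬φ)`: the syntax has no constant `true` for the usual `¬(true U ¬φ)`. -/
def globally (φ : QFK) : QFK := .not (.xuntil φ (.not φ))

/-- `A_π = A_{π'}` for `A` listed by `l`; the empty conjunction is `0_π → 0_π`. -/
def agreeOn : List ℕ → ℕ → ℕ → QFK
  | [], π, _ => imp (.atom 0 π) (.atom 0 π)
  | a :: l, π, π' => .and (iff (.atom a π) (.atom a π')) (agreeOn l π π')

def endsAt (r : ℕ) : QFK := .and (.patom r) (.next (.not (.patom r)))

def markedPrefix (r : ℕ) (L : QFK) : QFK :=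
  .xuntil (.patom r) (.and L (.and (.patom r) (.next (globally (.not (.patom r))))))

@[simp] theorem sat_imp {φ ψ : QFK} {i : ℕ} :
    QFK.Sat T Pi σ i (imp φ ψ) ↔ (QFK.Sat T Pi σ i φ → QFK.Sat T Pi σ i ψ) := by
  simp [imp, QFK.Sat]

@[simp] theorem sat_iff {φ ψ : QFK} {i : ℕ} :
    QFK.Sat T Pi σ i (iff φ ψ) ↔ (QFK.Sat T Pi σ i φ ↔ QFK.Sat T Pi σ i ψ) := by
  simp only [iff, QFK.Sat, sat_imp]
  exact iff_iff_implies_and_implies.symm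

@[simp] theorem sat_globally {φ : QFK} {i : ℕ} :
    QFK.Sat T Pi σ i (globally φ) ↔ ∀ k, i ≤ k → QFK.Sat T Pi σ k φ := by
  simp only [globally, QFK.Sat]
  refine ⟨fun h k hik => ?_, fun h ⟨k, hik, hk, _⟩ => hk (h k hik)⟩
  induction k using Nat.strong_induction_on with
  | _ k ih => exact by_contra fun hk => h ⟨k, hik, hk, fun j hij hjk => ih j hjk hij⟩

@[simp] theorem sat_agreeOn {l : List ℕ} {π' i : ℕ} :
    QFK.Sat T Pi σ i (agreeOn l π π') ↔ ∀ a ∈ l, (a ∈ Pi π i ↔ a ∈ Pi π' i) := by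
  induction l with
  | nil => simp [agreeOn]
  | cons a l ih => simp [agreeOn, QFK.Sat, ih]

@[simp] theorem sat_endsAt {i : ℕ} :
    QFK.Sat T Pi σ i (endsAt r) ↔ i ∈ σ r ∧ i + 1 ∉ σ r := Iff.rfl

theorem sat_markedPrefix {L : QFK} :
    QFK.Sat T Pi σ 0 (markedPrefix r L) ↔ ∃ k, σ r = Set.Iic k ∧ QFK.Sat T Pi σ k L := by
  simp only [markedPrefix, QFK.Sat, sat_globally, zero_le, true_and, true_implies]
  constructor
  · rintro ⟨k, ⟨hL, hk, hafter⟩, hbefore⟩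
    refine ⟨k, Set.ext fun j => ⟨fun hj => ?_, fun hj => ?_⟩, hL⟩
    · exact not_lt.1 fun (hkj : k < j) => hafter j hkj hj
    · rcases (Set.mem_Iic.1 hj).lt_or_eq with hjk | rfl
      exacts [hbefore j hjk, hk]
  · rintro ⟨k, hr, hL⟩
    simp only [hr, Set.mem_Iic]
    exact ⟨k, ⟨hL, le_rfl, fun j hkj => by omega⟩, fun j hjk => hjk.le⟩

theorem mem_tvars_agreeOn {l : List ℕ} {π' x : ℕ} (hx : x ∈ (agreeOn l π π').tvars) :
    x = π ∨ x = π' := by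
  induction l <;> simp_all [agreeOn, iff, imp, QFK.tvars]
  tauto

@[simp] theorem pvars_agreeOn (l : List ℕ) (π π' : ℕ) : (agreeOn l π π').pvars = ∅ := by
  induction l <;> simp_all [agreeOn, iff, imp, QFK.pvars]

theorem sat_globally_imp_agreeOn {k π' : ℕ} (hr : σ r = Set.Iic k) :
    QFK.Sat T Pi σ 0 (globally (imp (.patom r) (agreeOn A.toList π π'))) ↔
      ∀ a ∈ A, ∀ j ≤ k, (a ∈ Pi π j ↔ a ∈ Pi π' j) := by
  simp only [sat_globally, sat_imp, sat_agreeOn, QFK.Sat, hr, Set.mem_Iic, zero_le, true_implies,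
    Finset.mem_toList]
  exact ⟨fun h a ha j hj => h j hj a ha, fun h j hj a ha => h a ha j hj⟩

theorem sat_globally_imp_endsAt {k : ℕ} {φ : QFK} (hr : σ r = Set.Iic k) :
    QFK.Sat T Pi σ 0 (globally (imp (endsAt r) φ)) ↔ QFK.Sat T Pi σ k φ := by
  simp only [sat_globally, sat_imp, sat_endsAt, hr, Set.mem_Iic, not_le, zero_le, true_implies]
  refine ⟨fun h => h k ⟨le_rfl, k.lt_succ_self⟩, fun h j hj => ?_⟩
  obtain rfl : j = k := by omega
  exact h

/-- The constraint of the paper's translation, with `π₁` for its `π'`. -/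
noncomputable def knowPos (u r π₁ : ℕ) (A : Finset ℕ) (π : ℕ) (b : QFK) : QFK :=
  imp (.and (markedPrefix r (.patom u)) (globally (imp (.patom r) (agreeOn A.toList π π₁))))
    (globally (imp (endsAt r) (b.renameT (Function.update id π π₁))))

/-- The converse constraint, with `π₂` quantified existentially. -/
noncomputable def knowNeg (u r π₂ : ℕ) (A : Finset ℕ) (π : ℕ) (b : QFK) : QFK :=
  imp (markedPrefix r (.not (.patom u)))
    (.and (globally (imp (.patom r) (agreeOn A.toList π π₂)))
      (globally (imp (endsAt r) (.not (b.renameT (Function.update id π π₂))))))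

theorem sat_knowPos (hπ₁ : π₁ ∉ b.tvars) :
    QFK.Sat T Pi σ 0 (knowPos u r π₁ A π b) ↔
      ∀ k, σ r = Set.Iic k → k ∈ σ u → (∀ a ∈ A, ∀ j ≤ k, (a ∈ Pi π j ↔ a ∈ Pi π₁ j)) →
        QFK.Sat T (Function.update Pi π (Pi π₁)) σ k b := by
  simp only [knowPos, sat_imp, QFK.Sat, sat_markedPrefix]
  constructor
  · intro h k hr hu hagree
    rw [← sat_renameT_update hπ₁, ← sat_globally_imp_endsAt hr]
    exact h ⟨⟨k, hr, hu⟩, (sat_globally_imp_agreeOn hr).2 hagree⟩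
  · rintro h ⟨⟨k, hr, hu⟩, hagree⟩
    rw [sat_globally_imp_endsAt hr, sat_renameT_update hπ₁]
    exact h k hr hu ((sat_globally_imp_agreeOn hr).1 hagree)

theorem sat_knowNeg (hπ₂ : π₂ ∉ b.tvars) :
    QFK.Sat T Pi σ 0 (knowNeg u r π₂ A π b) ↔
      ∀ k, σ r = Set.Iic k → k ∉ σ u → (∀ a ∈ A, ∀ j ≤ k, (a ∈ Pi π j ↔ a ∈ Pi π₂ j)) ∧
        ¬ QFK.Sat T (Function.update Pi π (Pi π₂)) σ k b := by
  simp only [knowNeg, sat_imp, QFK.Sat, sat_markedPrefix]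
  constructor
  · intro h k hr hu
    have hk := h ⟨k, hr, hu⟩
    rwa [sat_globally_imp_agreeOn hr, sat_globally_imp_endsAt hr, QFK.Sat,
      sat_renameT_update hπ₂] at hk
  · rintro h ⟨k, hr, hu⟩
    rw [sat_globally_imp_agreeOn hr, sat_globally_imp_endsAt hr, QFK.Sat, sat_renameT_update hπ₂]
    exact h k hr hu

noncomputable def knowMatrix (u r π₁ π₂ : ℕ) (A : Finset ℕ) (π : ℕ) (b ψh : QFK) : QFK :=
  .and (.and (knowPos u r π₁ A π b) (knowNeg u r π₂ A π b)) ψh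

theorem mem_tvars_knowMatrix {x : ℕ} (hx : x ∈ (knowMatrix u r π₁ π₂ A π b ψh).tvars) :
    x = π₁ ∨ x = π₂ ∨ x = π ∨ x ∈ b.tvars ∨ x ∈ ψh.tvars := by
  simp only [knowMatrix, knowPos, knowNeg, imp, globally, markedPrefix, endsAt, QFK.tvars,
    Finset.mem_union, Finset.notMem_empty, false_or, or_self] at hx
  have hren : ∀ {π'}, x ∈ (b.renameT (Function.update id π π')).tvars → x = π' ∨ x ∈ b.tvars := by
    intro π' h
    obtain ⟨v, hv, rfl⟩ := mem_tvars_renameT h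
    by_cases hvπ : v = π
    · simp [hvπ]
    · simp [Function.update_of_ne hvπ, hv]
  rcases hx with ((h | h) | h | h) | h
  · rcases mem_tvars_agreeOn h with h | h <;> simp [h]
  · rcases hren h with h | h <;> simp [h]
  · rcases mem_tvars_agreeOn h with h | h <;> simp [h]
  · rcases hren h with h | h <;> simp [h]
  · simp [h]

theorem mem_pvars_knowMatrix {x : ℕ} (hx : x ∈ (knowMatrix u r π₁ π₂ A π b ψh).pvars) :
    x = u ∨ x = r ∨ x ∈ b.pvars ∨ x ∈ ψh.pvars := by
  simp [knowMatrix, knowPos, knowNeg, imp, globally, markedPrefix, endsAt, QFK.pvars] at hx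
  tauto

/-- Eliminating an outermost knowledge operator copies its body four times: into two
constraints, each under a `globally`, which duplicates its argument. -/
def kweight : QFK → ℕ
  | .atom _ _ => 0
  | .patom _ => 0
  | .not ψ => ψ.kweight
  | .and ψ₁ ψ₂ => ψ₁.kweight + ψ₂.kweight
  | .next ψ => ψ.kweight
  | .xuntil ψ₁ ψ₂ => ψ₁.kweight + ψ₂.kweight
  | .know _ _ ψ => 4 * ψ.kweight + 1

theorem kweight_renameT (f : ℕ → ℕ) (ψ : QFK) : (ψ.renameT f).kweight = ψ.kweight := by
  induction ψ <;> simp_all [renameT, kweight]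

@[simp] theorem kweight_agreeOn (l : List ℕ) (π π' : ℕ) : (agreeOn l π π').kweight = 0 := by
  induction l <;> simp_all [agreeOn, iff, imp, kweight]

theorem kweight_knowPos : (knowPos u r π₁ A π b).kweight = 2 * b.kweight := by
  simp [knowPos, imp, globally, markedPrefix, endsAt, kweight, kweight_renameT, two_mul]

theorem kweight_knowNeg : (knowNeg u r π₂ A π b).kweight = 2 * b.kweight := by
  simp [knowNeg, imp, globally, markedPrefix, endsAt, kweight, kweight_renameT, two_mul]

def eraseK : QFK → QF
  | .atom a π => .atom a π
  | .patom q => .patom q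
  | .not ψ => .not ψ.eraseK
  | .and ψ₁ ψ₂ => .and ψ₁.eraseK ψ₂.eraseK
  | .next ψ => .next ψ.eraseK
  | .xuntil ψ₁ ψ₂ => .xuntil ψ₁.eraseK ψ₂.eraseK
  | .know _ _ ψ => ψ.eraseK

theorem tvars_eraseK_subset (ψ : QFK) : ψ.eraseK.tvars ⊆ ψ.tvars := by
  induction ψ with
  | know A π ψ ih => exact ih.trans (Finset.subset_insert _ _)
  | _ => simp_all [eraseK, QF.tvars, QFK.tvars, Finset.union_subset_union]

theorem pvars_eraseK_subset (ψ : QFK) : ψ.eraseK.pvars ⊆ ψ.pvars := by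
  induction ψ <;> simp_all [eraseK, QF.pvars, QFK.pvars, Finset.union_subset_union]

theorem sat_eraseK (hψ : ψ.kweight = 0) (i : ℕ) :
    QF.Sat Pi σ i ψ.eraseK ↔ QFK.Sat T Pi σ i ψ := by
  induction ψ generalizing i with
  | know => simp [kweight] at hψ
  | _ => simp_all [kweight, eraseK, QF.Sat, QFK.Sat]

/-- `ψh` is `ψ` with one occurrence of `K_{A,π} b` replaced by `u`. No constructor descends under a
knowledge operator: there the trace assignment changes, which a single proposition cannot follow. -/
inductive AbstractsKnow (u : ℕ) (A : Finset ℕ) (π : ℕ) (b : QFK) : QFK → QFK → Prop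
  | know : AbstractsKnow u A π b (.know A π b) (.patom u)
  | not {ψ ψh : QFK} : AbstractsKnow u A π b ψ ψh → AbstractsKnow u A π b (.not ψ) (.not ψh)
  | andLeft {ψ ψh : QFK} (χ : QFK) :
      AbstractsKnow u A π b ψ ψh → AbstractsKnow u A π b (.and ψ χ) (.and ψh χ)
  | andRight {ψ ψh : QFK} (χ : QFK) :
      AbstractsKnow u A π b ψ ψh → AbstractsKnow u A π b (.and χ ψ) (.and χ ψh)
  | next {ψ ψh : QFK} : AbstractsKnow u A π b ψ ψh → AbstractsKnow u A π b (.next ψ) (.next ψh)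
  | xuntilLeft {ψ ψh : QFK} (χ : QFK) :
      AbstractsKnow u A π b ψ ψh → AbstractsKnow u A π b (.xuntil ψ χ) (.xuntil ψh χ)
  | xuntilRight {ψ ψh : QFK} (χ : QFK) :
      AbstractsKnow u A π b ψ ψh → AbstractsKnow u A π b (.xuntil χ ψ) (.xuntil χ ψh)

theorem exists_abstractsKnow (u : ℕ) (hψ : ψ.kweight ≠ 0) :
    ∃ A π b ψh, AbstractsKnow u A π b ψ ψh := by
  induction ψ with
  | atom | patom => simp [kweight] at hψ
  | not ψ ih =>
    obtain ⟨A, π, b, ψh, h⟩ := ih hψ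
    exact ⟨A, π, b, _, h.not⟩
  | and ψ₁ ψ₂ ih₁ ih₂ =>
    by_cases h₁ : ψ₁.kweight = 0
    · obtain ⟨A, π, b, ψh, h⟩ := ih₂ (by simpa [kweight, h₁] using hψ)
      exact ⟨A, π, b, _, h.andRight ψ₁⟩
    · obtain ⟨A, π, b, ψh, h⟩ := ih₁ h₁
      exact ⟨A, π, b, _, h.andLeft ψ₂⟩
  | next ψ ih =>
    obtain ⟨A, π, b, ψh, h⟩ := ih hψ
    exact ⟨A, π, b, _, h.next⟩
  | xuntil ψ₁ ψ₂ ih₁ ih₂ =>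
    by_cases h₁ : ψ₁.kweight = 0
    · obtain ⟨A, π, b, ψh, h⟩ := ih₂ (by simpa [kweight, h₁] using hψ)
      exact ⟨A, π, b, _, h.xuntilRight ψ₁⟩
    · obtain ⟨A, π, b, ψh, h⟩ := ih₁ h₁
      exact ⟨A, π, b, _, h.xuntilLeft ψ₂⟩
  | know A π b => exact ⟨A, π, b, _, .know⟩

namespace AbstractsKnow

theorem kweight_eq (h : AbstractsKnow u A π b ψ ψh) :
    ψ.kweight = ψh.kweight + (4 * b.kweight + 1) := by
  induction h <;> simp [kweight] <;> omega

theorem tvars_know_subset (h : AbstractsKnow u A π b ψ ψh) : insert π b.tvars ⊆ ψ.tvars := by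
  induction h <;> simp_all [QFK.tvars, Finset.subset_iff]

theorem pvars_know_subset (h : AbstractsKnow u A π b ψ ψh) : b.pvars ⊆ ψ.pvars := by
  induction h <;> simp_all [QFK.pvars, Finset.subset_iff]

theorem tvars_subset (h : AbstractsKnow u A π b ψ ψh) : ψh.tvars ⊆ ψ.tvars := by
  induction h <;> simp_all [QFK.tvars, Finset.union_subset_union]

theorem pvars_subset (h : AbstractsKnow u A π b ψ ψh) : ψh.pvars ⊆ insert u ψ.pvars := by
  induction h <;> grind [QFK.pvars]

theorem sat_iff (h : AbstractsKnow u A π b ψ ψh)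
    (hu : ∀ j, j ∈ σ u ↔ QFK.Sat T Pi σ j (.know A π b)) (i : ℕ) :
    QFK.Sat T Pi σ i ψh ↔ QFK.Sat T Pi σ i ψ := by
  induction h generalizing i <;> simp_all [QFK.Sat]

theorem sat_knowMatrix_update (h : AbstractsKnow u A π b ψ ψh)
    (hu : u ∉ ψ.pvars) (hr : r ∉ ψ.pvars) (hur : u ≠ r)
    (hπ₁ : π₁ ∉ ψ.tvars) (hπ₂ : π₂ ∉ ψ.tvars) (hπ₁₂ : π₁ ≠ π₂) (U R : Set ℕ) (t₁ t₂ : Trace) :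
    QFK.Sat T (Function.update (Function.update Pi π₁ t₁) π₂ t₂)
        (Function.update (Function.update σ u U) r R) 0 (knowMatrix u r π₁ π₂ A π b ψh) ↔
      ((∀ k, R = Set.Iic k → k ∈ U → (∀ a ∈ A, ∀ j ≤ k, (a ∈ Pi π j ↔ a ∈ t₁ j)) →
          QFK.Sat T (Function.update Pi π t₁) σ k b) ∧
        (∀ k, R = Set.Iic k → k ∉ U → (∀ a ∈ A, ∀ j ≤ k, (a ∈ Pi π j ↔ a ∈ t₂ j)) ∧
          ¬ QFK.Sat T (Function.update Pi π t₂) σ k b)) ∧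
        QFK.Sat T Pi (Function.update σ u U) 0 ψh := by
  have hπb := h.tvars_know_subset
  have hππ₁ : π ≠ π₁ := ne_of_mem_of_not_mem (hπb (Finset.mem_insert_self _ _)) hπ₁
  have hππ₂ : π ≠ π₂ := ne_of_mem_of_not_mem (hπb (Finset.mem_insert_self _ _)) hπ₂
  have hbπ₁ : π₁ ∉ b.tvars := fun hb => hπ₁ (hπb (Finset.mem_insert_of_mem hb))
  have hbπ₂ : π₂ ∉ b.tvars := fun hb => hπ₂ (hπb (Finset.mem_insert_of_mem hb))
  have hψhr : r ∉ ψh.pvars := fun hψh => by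
    rcases Finset.mem_insert.1 (h.pvars_subset hψh) with hr' | hr'
    exacts [hur hr'.symm, hr hr']
  have hb : ∀ t k,
      QFK.Sat T (Function.update (Function.update (Function.update Pi π₁ t₁) π₂ t₂) π t)
        (Function.update (Function.update σ u U) r R) k b ↔
      QFK.Sat T (Function.update Pi π t) σ k b := by
    intro t k
    rw [Function.update_comm hππ₂.symm, Function.update_comm hππ₁.symm, sat_update_trace hbπ₂,
      sat_update_trace hbπ₁, sat_update_prop (fun hb => hr (h.pvars_know_subset hb)),
      sat_update_prop (fun hb => hu (h.pvars_know_subset hb))]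
  simp only [knowMatrix, QFK.Sat, sat_knowPos hbπ₁, sat_knowNeg hbπ₂, hb,
    Function.update_self, Function.update_of_ne hπ₁₂, Function.update_of_ne hur,
    Function.update_of_ne hππ₁, Function.update_of_ne hππ₂, sat_update_prop hψhr,
    sat_update_trace (fun hψh => hπ₂ (h.tvars_subset hψh)),
    sat_update_trace (fun hψh => hπ₁ (h.tvars_subset hψh))]

theorem sat_iff_exists_knowMatrix (h : AbstractsKnow u A π b ψ ψh)
    (hT : T.Nonempty) (hu : u ∉ ψ.pvars) (hr : r ∉ ψ.pvars) (hur : u ≠ r)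
    (hπ₁ : π₁ ∉ ψ.tvars) (hπ₂ : π₂ ∉ ψ.tvars) (hπ₁₂ : π₁ ≠ π₂) :
    QFK.Sat T Pi σ 0 ψ ↔ ∃ U, ∀ R, ∀ t₁ ∈ T, ∃ t₂ ∈ T,
      QFK.Sat T (Function.update (Function.update Pi π₁ t₁) π₂ t₂)
        (Function.update (Function.update σ u U) r R) 0 (knowMatrix u r π₁ π₂ A π b ψh) := by
  simp only [h.sat_knowMatrix_update hu hr hur hπ₁ hπ₂ hπ₁₂]
  refine Iff.trans ?_ (exists_forall_exists_witness_iff hT _ _ _).symm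
  have hbu : u ∉ (QFK.know A π b).pvars := fun hb => hu (h.pvars_know_subset hb)
  rw [h.sat_iff (σ := Function.update σ u _) (fun j => ?_) 0, sat_update_prop hu]
  rw [Function.update_self, sat_update_prop hbu]
  rfl

theorem freeT_knowPrefix_subset (h : AbstractsKnow u A π b ψ ψh) {φ : HyperQPTL}
    (hφ : φ.freeT ⊆ (knowMatrix u r π₁ π₂ A π b ψh).tvars) :
    (HyperQPTL.pex u (.pall r (.all π₁ (.ex π₂ φ)))).freeT ⊆ ψ.tvars := by
  intro x hx
  simp only [HyperQPTL.freeT, Finset.mem_sdiff, Finset.mem_singleton] at hx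
  have hπb := h.tvars_know_subset
  rcases mem_tvars_knowMatrix (hφ hx.1.1) with h' | h' | h' | h' | h'
  exacts [absurd h' hx.2, absurd h' hx.1.2, h' ▸ hπb (Finset.mem_insert_self _ _),
    hπb (Finset.mem_insert_of_mem h'), h.tvars_subset h']

theorem freeP_knowPrefix_subset (h : AbstractsKnow u A π b ψ ψh) {φ : HyperQPTL}
    (hφ : φ.freeP ⊆ (knowMatrix u r π₁ π₂ A π b ψh).pvars) :
    (HyperQPTL.pex u (.pall r (.all π₁ (.ex π₂ φ)))).freeP ⊆ ψ.pvars := by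
  intro x hx
  simp only [HyperQPTL.freeP, Finset.mem_sdiff, Finset.mem_singleton] at hx
  rcases mem_pvars_knowMatrix (hφ hx.1.1) with h' | h' | h' | h'
  · exact absurd h' hx.2
  · exact absurd h' hx.1.2
  · exact h.pvars_know_subset h'
  · exact (Finset.mem_insert.1 (h.pvars_subset h')).resolve_left hx.2

end AbstractsKnow

theorem exists_hyperQPTL_equiv (ψ : QFK) :
    ∃ φ : HyperQPTL, φ.freeT ⊆ ψ.tvars ∧ φ.freeP ⊆ ψ.pvars ∧
      ∀ T : Set Trace, (T.Nonempty ∨ ψ.tvars = ∅) → ∀ Pi σ,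
        (QFK.Sat T Pi σ 0 ψ ↔ HyperQPTL.Sat T Pi σ 0 φ) := by
  induction hn : ψ.kweight using Nat.strong_induction_on generalizing ψ with
  | _ n ih =>
  by_cases h0 : ψ.kweight = 0
  · exact ⟨.qf ψ.eraseK, tvars_eraseK_subset ψ, pvars_eraseK_subset ψ,
      fun T _ Pi σ => (sat_eraseK h0 0).symm⟩
  obtain ⟨u, hu⟩ := Infinite.exists_notMem_finset ψ.pvars
  obtain ⟨r, hr⟩ := Infinite.exists_notMem_finset (insert u ψ.pvars)
  obtain ⟨π₁, hπ₁⟩ := Infinite.exists_notMem_finset ψ.tvars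
  obtain ⟨π₂, hπ₂⟩ := Infinite.exists_notMem_finset (insert π₁ ψ.tvars)
  rw [Finset.mem_insert, not_or] at hr hπ₂
  obtain ⟨A, π, b, ψh, h⟩ := exists_abstractsKnow u h0
  obtain ⟨φ, hφT, hφP, hφ⟩ := ih _ (by
      rw [← hn, h.kweight_eq]
      simp only [knowMatrix, kweight, kweight_knowPos, kweight_knowNeg]
      omega) (knowMatrix u r π₁ π₂ A π b ψh) rfl
  refine ⟨.pex u (.pall r (.all π₁ (.ex π₂ φ))), h.freeT_knowPrefix_subset hφT,
    h.freeP_knowPrefix_subset hφP, fun T hT Pi σ => ?_⟩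
  have hT : T.Nonempty :=
    hT.resolve_right (Finset.ne_empty_of_mem (h.tvars_know_subset (Finset.mem_insert_self _ _)))
  rw [h.sat_iff_exists_knowMatrix hT hu hr.2 (Ne.symm hr.1) hπ₁ hπ₂.2 (Ne.symm hπ₂.1)]
  exact exists_congr fun U => forall_congr' fun R => forall₂_congr fun t₁ _ =>
    exists_congr fun t₂ => and_congr_right fun _ => hφ T (.inl hT) _ _

end QFK

theorem HyperQPTLK.exists_hyperQPTL_equiv (φ : HyperQPTLK) :
    ∃ φ' : HyperQPTL, φ'.freeT ⊆ φ.freeT ∧ φ'.freeP ⊆ φ.freeP ∧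
      ∀ T : Set Trace, (T.Nonempty ∨ φ.freeT = ∅) → ∀ Pi σ,
        (HyperQPTLK.Sat T Pi σ 0 φ ↔ HyperQPTL.Sat T Pi σ 0 φ') := by
  induction φ with
  | qf ψ => exact ψ.exists_hyperQPTL_equiv
  | ex π φ ih =>
    obtain ⟨φ', hT, hP, hφ⟩ := ih
    refine ⟨.ex π φ', Finset.sdiff_subset_sdiff hT le_rfl, hP, fun T _ Pi σ => ?_⟩
    rcases T.eq_empty_or_nonempty with rfl | hne
    · simp [HyperQPTLK.Sat, HyperQPTL.Sat]
    · exact exists_congr fun t => and_congr_right fun _ => hφ T (.inl hne) _ σ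
  | all π φ ih =>
    obtain ⟨φ', hT, hP, hφ⟩ := ih
    refine ⟨.all π φ', Finset.sdiff_subset_sdiff hT le_rfl, hP, fun T _ Pi σ => ?_⟩
    rcases T.eq_empty_or_nonempty with rfl | hne
    · simp [HyperQPTLK.Sat, HyperQPTL.Sat]
    · exact forall₂_congr fun t _ => hφ T (.inl hne) _ σ
  | pex q φ ih =>
    obtain ⟨φ', hT, hP, hφ⟩ := ih
    exact ⟨.pex q φ', hT, Finset.sdiff_subset_sdiff hP le_rfl,
      fun T hT Pi σ => exists_congr fun s => hφ T hT Pi _⟩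
  | pall q φ ih =>
    obtain ⟨φ', hT, hP, hφ⟩ := ih
    exact ⟨.pall q φ', hT, Finset.sdiff_subset_sdiff hP le_rfl,
      fun T hT Pi σ => forall_congr' fun s => hφ T hT Pi _⟩

/-- **Elimination of the knowledge operator**: every HyperQPTL_K sentence can
be translated into a HyperQPTL sentence satisfied by exactly the same sets of
traces. -/
theorem hyperQPTLK_to_hyperQPTL :
    ∀ φ : HyperQPTLK, φ.Closed →
      ∃ φ' : HyperQPTL, φ'.Closed ∧
        ∀ T : Set Trace, (TSatK T φ ↔ TSat T φ') := by
  rintro φ ⟨hT, hP⟩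
  obtain ⟨φ', hT', hP', hφ⟩ := φ.exists_hyperQPTL_equiv
  exact ⟨φ', ⟨Finset.subset_empty.1 (hT ▸ hT'), Finset.subset_empty.1 (hP ▸ hP')⟩,
    fun T => hφ T (.inr hT) _ _⟩
end

section
/- HyperQCTL* is strictly more expressive than MPL[E] over Kripke structures: every MPL[E] sentence has a HyperQCTL* sentence satisfied by exactly the same Kripke structures, but some HyperQCTL* sentence has no equivalent MPL[E] sentence. -/
set_option maxHeartbeats 1000000


/-!
STATEMENT 14: HyperQCTL* is strictly more expressive than MPL[E] over Kripke
structures: every MPL[E] sentence has a HyperQCTL* sentence satisfied by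
exactly the same Kripke structures, but some HyperQCTL* sentence has no
equivalent MPL[E] sentence.
-/

/-- A Kripke structure: a set of states, an initial state, a transition
function with nonempty successor sets, and a state labeling over the atomic
propositions (drawn from `ℕ`). -/
structure Kripke where
  State : Type
  init : State
  trans : State → Set State
  trans_nonempty : ∀ s, (trans s).Nonempty
  label : State → Set ℕ

/-- Paths of `K` starting in state `s`. -/
def Kripke.PathFrom (K : Kripke) (s : K.State) (p : ℕ → K.State) : Prop :=
  p 0 = s ∧ ∀ i, p (i + 1) ∈ K.trans (p i)

/-- Paths of `K` starting in the initial state. -/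
def Kripke.IsPath (K : Kripke) (p : ℕ → K.State) : Prop :=
  K.PathFrom K.init p

/-! ### HyperQCTL* -/

/-- The labeling of `K` extended to finite state sequences (evaluating the
last state). -/
def Kripke.seqLabel' (K : Kripke) (l : List K.State) : Set ℕ :=
  match l.getLast? with
  | some s => K.label s
  | none => ∅

/-- HyperQCTL* formulas: `a_π | ¬φ | φ ∨ φ | X φ | φ U φ | ∃π.φ | ∃q.φ`. -/
inductive HQC : Type
  | atom : ℕ → ℕ → HQC           -- `a_π` (proposition, path variable)
  | not : HQC → HQC
  | or : HQC → HQC → HQC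
  | next : HQC → HQC
  | xuntil : HQC → HQC → HQC
  | ex : ℕ → HQC → HQC           -- `∃π.φ`
  | pex : ℕ → HQC → HQC          -- `∃q.φ` (propositional quantification)

/-- Satisfaction `K, Π, i ⊨ φ` of a HyperQCTL* formula: `L` is the current
labeling `S* → 2^AP` of the computation tree (initially the labeling of `K`),
`Pi` assigns path variables to paths of `K`, and `cur` is the most recently
quantified path. A propositional quantifier `∃q.φ` introduces a fresh
labeling `L'` agreeing with `L` on all propositions other than `q`. -/
def HQC.Sat (K : Kripke) :
    (List K.State → Set ℕ) → (ℕ → (ℕ → K.State)) → (ℕ → K.State) → ℕ →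
      HQC → Prop
  | L, Pi, _, i, .atom a π => a ∈ L ((List.range (i + 1)).map (Pi π))
  | L, Pi, cur, i, .not φ => ¬ HQC.Sat K L Pi cur i φ
  | L, Pi, cur, i, .or φ₁ φ₂ =>
      HQC.Sat K L Pi cur i φ₁ ∨ HQC.Sat K L Pi cur i φ₂
  | L, Pi, cur, i, .next φ => HQC.Sat K L Pi cur (i + 1) φ
  | L, Pi, cur, i, .xuntil φ₁ φ₂ =>
      ∃ k, i ≤ k ∧ HQC.Sat K L Pi cur k φ₂ ∧
        ∀ j, i ≤ j → j < k → HQC.Sat K L Pi cur j φ₁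
  | L, Pi, cur, i, .ex π φ =>
      ∃ p : ℕ → K.State, K.PathFrom (cur i) p ∧
        HQC.Sat K L (Function.update Pi π p) p i φ
  | L, Pi, cur, i, .pex q φ =>
      ∃ L' : List K.State → Set ℕ,
        (∀ w, ∀ b, b ≠ q → (b ∈ L' w ↔ b ∈ L w)) ∧
        HQC.Sat K L' Pi cur i φ

/-- Free path variables of a HyperQCTL* formula. -/
def HQC.free : HQC → Finset ℕ
  | .atom _ π => {π}
  | .not φ => φ.free
  | .or φ₁ φ₂ => φ₁.free ∪ φ₂.free
  | .next φ => φ.free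
  | .xuntil φ₁ φ₂ => φ₁.free ∪ φ₂.free
  | .ex π φ => φ.free \ {π}
  | .pex _ φ => φ.free

/-- Temporal operators occur only inside the scope of path quantifiers. -/
def HQC.Guarded : HQC → Bool → Prop
  | .atom _ _, _ => True
  | .not φ, b => HQC.Guarded φ b
  | .or φ₁ φ₂, b => HQC.Guarded φ₁ b ∧ HQC.Guarded φ₂ b
  | .next φ, b => b = true ∧ HQC.Guarded φ b
  | .xuntil φ₁ φ₂, b => b = true ∧ HQC.Guarded φ₁ b ∧ HQC.Guarded φ₂ b
  | .ex _ φ, _ => HQC.Guarded φ true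
  | .pex _ φ, b => HQC.Guarded φ b

/-- A HyperQCTL* sentence. -/
def HQC.Sentence (φ : HQC) : Prop := φ.free = ∅ ∧ φ.Guarded false

/-- `K ⊨ φ` iff `K, ∅, 0 ⊨ φ` with the original labeling of `K`. -/
def Kripke.ModelsQ (K : Kripke) (φ : HQC) : Prop :=
  HQC.Sat K K.seqLabel' (fun _ _ => K.init) (fun _ => K.init) 0 φ

/-! ### MPL[E] -/

/-- `l` is a finite prefix of a path of `K` starting in the initial state. -/
def Kripke.IsPathPrefix (K : Kripke) (l : List K.State) : Prop :=
  ∃ p : ℕ → K.State, K.IsPath p ∧ l = (List.range l.length).map p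

/-- The (prefix-closed) set of all finite prefixes of the path `p`. -/
def Kripke.PrefixSet (K : Kripke) (p : ℕ → K.State) : Set (List K.State) :=
  { l | l = (List.range l.length).map p }

/-- The labeling of a finite state sequence: the label of its last state. -/
def Kripke.seqLabel (K : Kripke) (l : List K.State) : Set ℕ :=
  match l.getLast? with
  | some s => K.label s
  | none => ∅

/-- MPL[E] formulas:
`P_a(x) | x < y | x = y | x ∈ X | E(x,y) | ¬φ | φ ∨ φ | ∃x.φ | ∃X.φ`. -/
inductive MPLE : Type
  | patom : ℕ → ℕ → MPLE         -- `P_a(x)`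
  | lt : ℕ → ℕ → MPLE            -- `x < y` (proper prefix)
  | eq : ℕ → ℕ → MPLE            -- `x = y`
  | mem : ℕ → ℕ → MPLE           -- `x ∈ X`
  | eqlevel : ℕ → ℕ → MPLE       -- `E(x, y)`
  | not : MPLE → MPLE
  | or : MPLE → MPLE → MPLE
  | exFO : ℕ → MPLE → MPLE       -- `∃x.φ`
  | exSO : ℕ → MPLE → MPLE       -- `∃X.φ`

/-- Satisfaction `K, V₁, V₂ ⊨ φ`: first-order variables are assigned finite
prefixes of paths of `K` starting in the initial state, second-order variables
the prefix-closed sets of prefixes of full paths of `K`. -/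
def MPLE.Sat (K : Kripke) :
    (ℕ → List K.State) → (ℕ → Set (List K.State)) → MPLE → Prop
  | V₁, _, .patom a x => a ∈ K.seqLabel (V₁ x)
  | V₁, _, .lt x y => V₁ x <+: V₁ y ∧ V₁ x ≠ V₁ y
  | V₁, _, .eq x y => V₁ x = V₁ y
  | V₁, V₂, .mem x X => V₁ x ∈ V₂ X
  | V₁, _, .eqlevel x y => (V₁ x).length = (V₁ y).length
  | V₁, V₂, .not φ => ¬ MPLE.Sat K V₁ V₂ φ
  | V₁, V₂, .or φ₁ φ₂ => MPLE.Sat K V₁ V₂ φ₁ ∨ MPLE.Sat K V₁ V₂ φ₂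
  | V₁, V₂, .exFO x φ =>
      ∃ l : List K.State, K.IsPathPrefix l ∧
        MPLE.Sat K (Function.update V₁ x l) V₂ φ
  | V₁, V₂, .exSO X φ =>
      ∃ p : ℕ → K.State, K.IsPath p ∧
        MPLE.Sat K V₁ (Function.update V₂ X (K.PrefixSet p)) φ

/-- Free first-order variables. -/
def MPLE.freeFO : MPLE → Finset ℕ
  | .patom _ x => {x}
  | .lt x y => {x, y}
  | .eq x y => {x, y}
  | .mem x _ => {x}
  | .eqlevel x y => {x, y}
  | .not φ => φ.freeFO
  | .or φ₁ φ₂ => φ₁.freeFO ∪ φ₂.freeFO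
  | .exFO x φ => φ.freeFO \ {x}
  | .exSO _ φ => φ.freeFO

/-- Free second-order variables. -/
def MPLE.freeSO : MPLE → Finset ℕ
  | .patom _ _ => ∅
  | .lt _ _ => ∅
  | .eq _ _ => ∅
  | .mem _ X => {X}
  | .eqlevel _ _ => ∅
  | .not φ => φ.freeSO
  | .or φ₁ φ₂ => φ₁.freeSO ∪ φ₂.freeSO
  | .exFO _ φ => φ.freeSO
  | .exSO X φ => φ.freeSO \ {X}

/-- A closed MPL[E] formula. -/
def MPLE.Closed (φ : MPLE) : Prop := φ.freeFO = ∅ ∧ φ.freeSO = ∅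

/-- `K ⊨ φ` for closed `φ`. -/
def Kripke.ModelsM (K : Kripke) (φ : MPLE) : Prop :=
  MPLE.Sat K (fun _ => ([] : List K.State)) (fun _ => (∅ : Set (List K.State))) φ

namespace Sep

noncomputable def somePath (K : Kripke) (s : K.State) : ℕ → K.State
  | 0 => s
  | n+1 => (K.trans_nonempty (somePath K s n)).choose

lemma somePath_path (K : Kripke) (s : K.State) : K.PathFrom s (somePath K s) :=
  ⟨rfl, fun _ => (K.trans_nonempty _).choose_spec⟩

lemma getLast?_map_range {α : Type*} (p : ℕ → α) (k : ℕ) :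
    (((List.range (k+1)).map p)).getLast? = some (p k) := by
  simp [List.range_succ]

lemma seqLabel'_pfx (K : Kripke) (p : ℕ → K.State) (k : ℕ) :
    K.seqLabel' ((List.range (k+1)).map p) = K.label (p k) := by
  simp only [Kripke.seqLabel', getLast?_map_range]

lemma seqLabel_pfx (K : Kripke) (p : ℕ → K.State) (k : ℕ) :
    K.seqLabel ((List.range (k+1)).map p) = K.label (p k) := by
  simp only [Kripke.seqLabel, getLast?_map_range]

lemma range_prefix {m n : ℕ} (h : m ≤ n) : List.range m <+: List.range n := by
  have : List.range m = (List.range n).take m := by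
    rw [List.take_range]; simp [Nat.min_eq_left h]
  rw [this]; exact List.take_prefix _ _

lemma pfx_prefix {α : Type*} (p : ℕ → α) {m n : ℕ} (h : m ≤ n) :
    (List.range m).map p <+: (List.range n).map p :=
  (range_prefix h).map p

lemma prefix_pfx_eq {α : Type*} {p : ℕ → α} {w : List α} {n : ℕ}
    (h : w <+: (List.range n).map p) :
    w = (List.range w.length).map p := by
  have hl : w.length ≤ n := by simpa using h.length_le
  rw [List.prefix_iff_eq_take.mp h]
  rw [← List.map_take, List.take_range]
  simp [Nat.min_eq_left hl]

lemma isPathPrefix_pfx (K : Kripke) {p : ℕ → K.State} (hp : K.IsPath p) (m : ℕ) :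
    K.IsPathPrefix ((List.range m).map p) :=
  ⟨p, hp, by simp⟩

/-! ### The word-like Kripke structures used for the separation -/

@[reducible] def Kw (n : ℕ) : Kripke where
  State := ℕ
  init := 0
  trans := fun s => {s + 1}
  trans_nonempty := fun s => ⟨s + 1, rfl⟩
  label := fun s => if s = n then {0} else ∅

lemma Kw_pathFrom {n : ℕ} (s : ℕ) (p : ℕ → ℕ) :
    (Kw n).PathFrom s p ↔ ∀ i, p i = s + i := by
  constructor
  · rintro ⟨h0, hs⟩ i
    induction i with
    | zero => simpa using h0
    | succ k ih =>
        have := hs k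
        simp only [Kw, Set.mem_singleton_iff] at this
        omega
  · intro h
    refine ⟨by simpa using h 0, fun i => ?_⟩
    simp only [Kw, Set.mem_singleton_iff]
    rw [h i, h (i+1)]; omega

lemma Kw_isPath {n : ℕ} (p : ℕ → ℕ) : (Kw n).IsPath p ↔ ∀ i, p i = i := by
  unfold Kripke.IsPath
  rw [show (Kw n).init = (0:ℕ) from rfl, Kw_pathFrom]
  simp

lemma Kw_id_isPath (n : ℕ) : (Kw n).IsPath id := (Kw_isPath _).mpr (fun _ => rfl)

lemma map_range_self {m : ℕ} {p : ℕ → ℕ} (hp : ∀ i, p i = i) :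
    (List.range m).map p = List.range m := by
  rw [show (List.range m).map p = (List.range m).map id from ?_, List.map_id]
  apply List.map_congr_left
  intro a _; simp [hp a]

lemma Kw_isPathPrefix {n : ℕ} (l : List ℕ) :
    (Kw n).IsPathPrefix l ↔ l = List.range l.length := by
  constructor
  · rintro ⟨p, hp, hl⟩
    rw [Kw_isPath] at hp
    rw [hl, map_range_self hp]; simp [map_range_self hp]
  · intro h
    exact ⟨id, Kw_id_isPath n, by simpa using h⟩

lemma Kw_prefixSet {n : ℕ} {p : ℕ → ℕ} (hp : (Kw n).IsPath p) :
    (Kw n).PrefixSet p = {l : List ℕ | l = List.range l.length} := by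
  rw [Kw_isPath] at hp
  ext l
  simp only [Kripke.PrefixSet, Set.mem_setOf_eq, map_range_self hp]

lemma Kw_seqLabel_range (n m : ℕ) :
    (Kw n).seqLabel (List.range m) = if m = n + 1 then {0} else ∅ := by
  cases m with
  | zero => simp [Kripke.seqLabel]
  | succ k =>
      have : List.range (k+1) = (List.range (k+1)).map id := by simp
      rw [this, seqLabel_pfx]
      simp only [Kw, id_eq]
      by_cases h : k = n <;> simp [h] <;> omega

/-! ### Reduced semantics of MPL[E] over `Kw n` -/

/-- Reduced evaluation of MPL[E] over `Kw n`, where first-order variables are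
lengths of prefixes and second-order variables booleans. `N = n + 1`. -/
def Ev (N : ℕ) (f : ℕ → ℕ) (g : ℕ → Prop) : MPLE → Prop
  | .patom a x => a = 0 ∧ f x = N
  | .lt x y => f x < f y
  | .eq x y => f x = f y
  | .mem x X => g X
  | .eqlevel x y => f x = f y
  | .not φ => ¬ Ev N f g φ
  | .or φ₁ φ₂ => Ev N f g φ₁ ∨ Ev N f g φ₂
  | .exFO x φ => ∃ m, Ev N (Function.update f x m) g φ
  | .exSO X φ => Ev N f (Function.update g X True) φ

lemma Ev_correct (n : ℕ) (φ : MPLE) :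
    ∀ (f : ℕ → ℕ) (g : ℕ → Prop) (V₁ : ℕ → List ℕ) (V₂ : ℕ → Set (List ℕ)),
    (∀ x, V₁ x = List.range (f x)) →
    (∀ X, V₂ X = {l : List ℕ | g X ∧ l = List.range l.length}) →
    (MPLE.Sat (Kw n) V₁ V₂ φ ↔ Ev (n+1) f g φ) := by
  induction φ with
  | patom a x =>
      intro f g V₁ V₂ h1 h2
      simp only [MPLE.Sat, Ev, h1 x, Kw_seqLabel_range]
      by_cases h : f x = n + 1 <;> simp [h] <;> tauto
  | lt x y =>
      intro f g V₁ V₂ h1 h2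
      simp only [MPLE.Sat, Ev, h1 x, h1 y]
      constructor
      · rintro ⟨hp, hne⟩
        have hle : f x ≤ f y := by simpa using hp.length_le
        rcases eq_or_lt_of_le hle with h | h
        · exact absurd (by rw [h]) hne
        · exact h
      · intro h
        refine ⟨range_prefix h.le, fun hc => ?_⟩
        have := congrArg List.length hc
        simp at this; omega
  | eq x y =>
      intro f g V₁ V₂ h1 h2
      simp only [MPLE.Sat, Ev, h1 x, h1 y]
      constructor
      · intro h; have := congrArg List.length h; simpa using this
      · intro h; rw [h]
  | mem x X =>
      intro f g V₁ V₂ h1 h2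
      simp only [MPLE.Sat, Ev, h1 x, h2 X, Set.mem_setOf_eq]
      exact ⟨fun h => h.1, fun h => ⟨h, by simp⟩⟩
  | eqlevel x y =>
      intro f g V₁ V₂ h1 h2
      simp only [MPLE.Sat, Ev, h1 x, h1 y]
      constructor
      · intro h; simpa using h
      · intro h; rw [h]
  | not φ ih =>
      intro f g V₁ V₂ h1 h2
      simp only [MPLE.Sat, Ev]
      rw [ih f g V₁ V₂ h1 h2]
  | or φ₁ φ₂ ih₁ ih₂ =>
      intro f g V₁ V₂ h1 h2
      simp only [MPLE.Sat, Ev]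
      rw [ih₁ f g V₁ V₂ h1 h2, ih₂ f g V₁ V₂ h1 h2]
  | exFO x φ ih =>
      intro f g V₁ V₂ h1 h2
      simp only [MPLE.Sat, Ev]
      constructor
      · rintro ⟨l, hl, hsat⟩
        refine ⟨l.length, ?_⟩
        rw [← ih (Function.update f x l.length) g _ V₂ ?_ h2]
        · exact hsat
        · intro y
          by_cases hy : y = x
          · subst hy; simp [Function.update_self]; exact (Kw_isPathPrefix l).mp hl
          · simp [Function.update_of_ne hy, h1 y]
      · rintro ⟨m, hm⟩
        refine ⟨List.range m, (Kw_isPathPrefix _).mpr (by simp), ?_⟩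
        rw [ih (Function.update f x m) g _ V₂ ?_ h2]
        · exact hm
        · intro y
          by_cases hy : y = x
          · subst hy; simp
          · simp [Function.update_of_ne hy, h1 y]
  | exSO X φ ih =>
      intro f g V₁ V₂ h1 h2
      simp only [MPLE.Sat, Ev]
      constructor
      · rintro ⟨p, hp, hsat⟩
        rw [← ih f (Function.update g X True) V₁ _ h1 ?_]
        · exact hsat
        · intro Y
          by_cases hY : Y = X
          · subst hY; simp [Function.update_self, Kw_prefixSet hp]
          · simp [Function.update_of_ne hY, h2 Y]
      · intro h
        refine ⟨id, Kw_id_isPath n, ?_⟩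
        rw [ih f (Function.update g X True) V₁ _ h1 ?_]
        · exact h
        · intro Y
          by_cases hY : Y = X
          · subst hY; simp [Function.update_self, Kw_prefixSet (Kw_id_isPath n)]
          · simp [Function.update_of_ne hY, h2 Y]

end Sep
namespace Sep

/-! ### Ehrenfeucht–Fraïssé machinery over `(ℕ, <, {N})` -/

/-- Truncated-distance similarity of the pairs `(a,b)` and `(a',b')`. -/
def Dp (t a b a' b' : ℕ) : Prop :=
  min t (a - b) = min t (a' - b') ∧ min t (b - a) = min t (b' - a')

lemma Dp.mono {s t a b a' b' : ℕ} (hst : s ≤ t) (h : Dp t a b a' b') :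
    Dp s a b a' b' := by
  obtain ⟨h1, h2⟩ := h
  constructor <;> omega

lemma Dp.symm {t a b a' b' : ℕ} (h : Dp t a b a' b') : Dp t b a b' a' :=
  ⟨h.2, h.1⟩

/-- The key EF extension step: any new point `a` on the left can be matched by
a point `a'` on the right, halving the similarity budget. -/
lemma ext_point (t : ℕ) (ht : 1 ≤ t) (P : Finset (ℕ × ℕ)) (h0 : (0, 0) ∈ P)
    (hP : ∀ p ∈ P, ∀ q ∈ P, Dp (2 * t) p.1 q.1 p.2 q.2) (a : ℕ) :
    ∃ a', ∀ p ∈ P, Dp t a p.1 a' p.2 := by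
  classical
  set Pl := P.filter (fun p => p.1 ≤ a) with hPl
  have h0l : (0, 0) ∈ Pl := Finset.mem_filter.mpr ⟨h0, Nat.zero_le a⟩
  have hPlne : (Pl.image Prod.fst).Nonempty := ⟨0, Finset.mem_image_of_mem _ h0l⟩
  set lv := (Pl.image Prod.fst).max' hPlne with hlv
  obtain ⟨pl, hplmem, hpl1⟩ := Finset.mem_image.mp ((Pl.image Prod.fst).max'_mem hPlne)
  have hplP : pl ∈ P := (Finset.mem_filter.mp hplmem).1
  have hpla : pl.1 ≤ a := (Finset.mem_filter.mp hplmem).2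
  have hmax : ∀ p ∈ P, p.1 ≤ a → p.1 ≤ pl.1 := by
    intro p hp hpa
    rw [hpl1]
    exact Finset.le_max' _ _ (Finset.mem_image_of_mem _ (Finset.mem_filter.mpr ⟨hp, hpa⟩))
  by_cases hc1 : a - pl.1 < t
  · -- close to the left landmark
    refine ⟨pl.2 + (a - pl.1), fun p hp => ?_⟩
    have hD := hP p hp pl hplP
    have hD0 := hP p hp (0, 0) h0
    have hDl0 := hP pl hplP (0, 0) h0
    obtain ⟨d1, d2⟩ := hD
    rcases le_or_gt p.1 a with h | h
    · have hple := hmax p hp h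
      constructor <;> omega
    · constructor <;> omega
  · by_cases hc2 : ∃ q ∈ P, a < q.1 ∧ q.1 - a < t
    · -- close to a right landmark
      obtain ⟨pr, hprP, hpra, hprt⟩ := hc2
      refine ⟨pr.2 - (pr.1 - a), fun p hp => ?_⟩
      have hD := hP p hp pr hprP
      have hD0 := hP p hp (0, 0) h0
      have hDr0 := hP pr hprP (0, 0) h0
      obtain ⟨d1, d2⟩ := hD
      obtain ⟨e1, e2⟩ := hDr0
      constructor <;> omega
    · -- far from all landmarks
      push_neg at hc2
      refine ⟨pl.2 + t, fun p hp => ?_⟩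
      have hD := hP p hp pl hplP
      have hD0 := hP p hp (0, 0) h0
      obtain ⟨d1, d2⟩ := hD
      rcases le_or_gt p.1 a with h | h
      · have hple := hmax p hp h
        constructor <;> omega
      · have := hc2 p hp h
        constructor <;> omega

end Sep
namespace Sep

/-- Quantifier (first-order) depth of an MPL[E] formula. -/
def mdepth : MPLE → ℕ
  | .patom _ _ => 0
  | .lt _ _ => 0
  | .eq _ _ => 0
  | .mem _ _ => 0
  | .eqlevel _ _ => 0
  | .not φ => mdepth φ
  | .or φ₁ φ₂ => max (mdepth φ₁) (mdepth φ₂)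
  | .exFO _ φ => mdepth φ + 1
  | .exSO _ φ => mdepth φ

/-- The landmark pairs of a pair of assignments. -/
def PP (S : Finset ℕ) (f f' : ℕ → ℕ) (N N' : ℕ) : Finset (ℕ × ℕ) :=
  insert (0, 0) (insert (N, N') (S.image fun x => (f x, f' x)))

lemma mem_PP_self (S : Finset ℕ) (f f' : ℕ → ℕ) (N N' : ℕ) {x : ℕ} (hx : x ∈ S) :
    (f x, f' x) ∈ PP S f f' N N' := by
  simp only [PP, Finset.mem_insert]
  right; right; exact Finset.mem_image_of_mem _ hx

lemma mem_PP_zero (S : Finset ℕ) (f f' : ℕ → ℕ) (N N' : ℕ) :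
    (0, 0) ∈ PP S f f' N N' := by simp [PP]

lemma mem_PP_N (S : Finset ℕ) (f f' : ℕ → ℕ) (N N' : ℕ) :
    (N, N') ∈ PP S f f' N N' := by simp [PP]

/-- The Ehrenfeucht–Fraïssé transfer theorem for the reduced semantics. -/
lemma EF (t : ℕ) (ht : 1 ≤ t) :
    ∀ (ψ : MPLE) (S : Finset ℕ) (f f' : ℕ → ℕ) (g : ℕ → Prop) (N N' : ℕ),
    ψ.freeFO ⊆ S →
    (∀ p ∈ PP S f f' N N', ∀ q ∈ PP S f f' N N',
      Dp (2 ^ mdepth ψ * t) p.1 q.1 p.2 q.2) →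
    (Ev N f g ψ ↔ Ev N' f' g ψ) := by
  intro ψ
  induction ψ with
  | patom a x =>
      intro S f f' g N N' hfree hP
      have hx : x ∈ S := hfree (by simp [MPLE.freeFO])
      have := hP _ (mem_PP_self S f f' N N' hx) _ (mem_PP_N S f f' N N')
      obtain ⟨h1, h2⟩ := this
      simp only [mdepth, pow_zero, one_mul] at h1 h2
      simp only [Ev]
      constructor <;> (rintro ⟨rfl, h⟩; exact ⟨rfl, by omega⟩)
  | lt x y =>
      intro S f f' g N N' hfree hP
      have hx : x ∈ S := hfree (by simp [MPLE.freeFO])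
      have hy : y ∈ S := hfree (by simp [MPLE.freeFO])
      have := hP _ (mem_PP_self S f f' N N' hx) _ (mem_PP_self S f f' N N' hy)
      obtain ⟨h1, h2⟩ := this
      simp only [mdepth, pow_zero, one_mul] at h1 h2
      simp only [Ev]
      omega
  | eq x y =>
      intro S f f' g N N' hfree hP
      have hx : x ∈ S := hfree (by simp [MPLE.freeFO])
      have hy : y ∈ S := hfree (by simp [MPLE.freeFO])
      obtain ⟨h1, h2⟩ := hP _ (mem_PP_self S f f' N N' hx) _ (mem_PP_self S f f' N N' hy)
      simp only [mdepth, pow_zero, one_mul] at h1 h2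
      simp only [Ev]
      omega
  | mem x X =>
      intro S f f' g N N' hfree hP
      simp only [Ev]
  | eqlevel x y =>
      intro S f f' g N N' hfree hP
      have hx : x ∈ S := hfree (by simp [MPLE.freeFO])
      have hy : y ∈ S := hfree (by simp [MPLE.freeFO])
      obtain ⟨h1, h2⟩ := hP _ (mem_PP_self S f f' N N' hx) _ (mem_PP_self S f f' N N' hy)
      simp only [mdepth, pow_zero, one_mul] at h1 h2
      simp only [Ev]
      omega
  | not φ ih =>
      intro S f f' g N N' hfree hP
      simp only [Ev]
      rw [ih S f f' g N N' hfree hP]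
  | or φ₁ φ₂ ih₁ ih₂ =>
      intro S f f' g N N' hfree hP
      have hsub₁ : φ₁.freeFO ⊆ S := fun x hx => hfree (Finset.mem_union_left _ hx)
      have hsub₂ : φ₂.freeFO ⊆ S := fun x hx => hfree (Finset.mem_union_right _ hx)
      have hm₁ : 2 ^ mdepth φ₁ * t ≤ 2 ^ mdepth (MPLE.or φ₁ φ₂) * t :=
        Nat.mul_le_mul_right _ (Nat.pow_le_pow_right (by norm_num) (le_max_left _ _))
      have hm₂ : 2 ^ mdepth φ₂ * t ≤ 2 ^ mdepth (MPLE.or φ₁ φ₂) * t :=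
        Nat.mul_le_mul_right _ (Nat.pow_le_pow_right (by norm_num) (le_max_right _ _))
      simp only [Ev]
      rw [ih₁ S f f' g N N' hsub₁ (fun p hp q hq => (hP p hp q hq).mono hm₁),
          ih₂ S f f' g N N' hsub₂ (fun p hp q hq => (hP p hp q hq).mono hm₂)]
  | exFO x φ ih =>
      intro S f f' g N N' hfree hP
      have hsub : φ.freeFO ⊆ insert x S := by
        intro y hy
        by_cases hxy : y = x
        · simp [hxy]
        · exact Finset.mem_insert_of_mem (hfree (Finset.mem_sdiff.mpr ⟨hy, by simp [hxy]⟩))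
      have hkey : ∀ (a : ℕ), (∃ a', ∀ p ∈ PP S f f' N N', Dp (2 ^ mdepth φ * t) a p.1 a' p.2) := by
        intro a
        have hside : ∀ p ∈ PP S f f' N N', ∀ q ∈ PP S f f' N N',
            Dp (2 * (2 ^ mdepth φ * t)) p.1 q.1 p.2 q.2 := by
          intro p hp q hq
          have := hP p hp q hq
          simp only [mdepth] at this
          have heq : 2 ^ (mdepth φ + 1) * t = 2 * (2 ^ mdepth φ * t) := by ring
          rw [heq] at this
          exact this
        exact ext_point (2 ^ mdepth φ * t) (Nat.mul_pos (pow_pos two_pos _) ht) _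
          (mem_PP_zero S f f' N N') hside a
      have hkey' : ∀ (a' : ℕ), (∃ a, ∀ p ∈ PP S f f' N N', Dp (2 ^ mdepth φ * t) a p.1 a' p.2) := by
        intro a'
        have h0' : ((0:ℕ), (0:ℕ)) ∈ (PP S f f' N N').image Prod.swap := by
          exact Finset.mem_image_of_mem _ (mem_PP_zero S f f' N N')
        have hside : ∀ p ∈ (PP S f f' N N').image Prod.swap,
            ∀ q ∈ (PP S f f' N N').image Prod.swap,
            Dp (2 * (2 ^ mdepth φ * t)) p.1 q.1 p.2 q.2 := by
          intro p hp q hq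
          simp only [Finset.mem_image] at hp hq
          obtain ⟨p₀, hp₀, rfl⟩ := hp
          obtain ⟨q₀, hq₀, rfl⟩ := hq
          have := hP p₀ hp₀ q₀ hq₀
          simp only [mdepth] at this
          have heq : 2 ^ (mdepth φ + 1) * t = 2 * (2 ^ mdepth φ * t) := by ring
          rw [heq] at this
          exact ⟨this.1.symm, this.2.symm⟩
        obtain ⟨a, ha⟩ := ext_point (2 ^ mdepth φ * t) (Nat.mul_pos (pow_pos two_pos _) ht)
          ((PP S f f' N N').image Prod.swap) h0' hside a'
        exact ⟨a, fun p hp => by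
          have := ha p.swap (Finset.mem_image_of_mem _ hp)
          exact ⟨this.1.symm, this.2.symm⟩⟩
      have hstep : ∀ (a a' : ℕ), (∀ p ∈ PP S f f' N N', Dp (2 ^ mdepth φ * t) a p.1 a' p.2) →
          (Ev N (Function.update f x a) g φ ↔ Ev N' (Function.update f' x a') g φ) := by
        intro a a' ha
        apply ih (insert x S) _ _ g N N' hsub
        intro p hp q hq
        have hmem : ∀ r ∈ PP (insert x S) (Function.update f x a) (Function.update f' x a') N N',
            r = (a, a') ∨ r ∈ PP S f f' N N' := by
          intro r hr
          simp only [PP, Finset.mem_insert, Finset.mem_image] at hr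
          rcases hr with rfl | rfl | ⟨y, hy, rfl⟩
          · right; exact mem_PP_zero S f f' N N'
          · right; exact mem_PP_N S f f' N N'
          · rcases hy with rfl | hyS
            · left; simp
            · by_cases hxy : y = x
              · subst hxy; left; simp
              · right
                rw [Function.update_of_ne hxy, Function.update_of_ne hxy]
                exact mem_PP_self S f f' N N' hyS
        have hmono : (2:ℕ) ^ mdepth φ * t ≤ 2 ^ (mdepth φ + 1) * t := by
          have : (2:ℕ) ^ mdepth φ ≤ 2 ^ (mdepth φ + 1) :=
            Nat.pow_le_pow_right (by norm_num) (Nat.le_succ _)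
          exact Nat.mul_le_mul_right _ this
        rcases hmem p hp with rfl | hpold <;> rcases hmem q hq with rfl | hqold
        · exact ⟨by simp, by simp⟩
        · exact ha q hqold
        · exact (ha p hpold).symm
        · exact ((hP p hpold q hqold).mono (by simp only [mdepth]; exact hmono))
      simp only [Ev]
      constructor
      · rintro ⟨a, ha⟩
        obtain ⟨a', ha'⟩ := hkey a
        exact ⟨a', (hstep a a' ha').mp ha⟩
      · rintro ⟨a', ha'⟩
        obtain ⟨a, ha⟩ := hkey' a'
        exact ⟨a, (hstep a a' ha).mpr ha'⟩
  | exSO X φ ih =>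
      intro S f f' g N N' hfree hP
      simp only [Ev]
      exact ih S f f' (Function.update g X True) N N' hfree hP

end Sep
namespace Sep

/-! ### HQC helper connectives -/

/-- A tautology (mentioning path variable `0`). -/
def tt : HQC := .or (.atom 0 0) (.not (.atom 0 0))

def andH (a b : HQC) : HQC := .not (.or (.not a) (.not b))

def FH (χ : HQC) : HQC := .xuntil tt χ

def GH (χ : HQC) : HQC := .not (FH (.not χ))

def iffH (a b : HQC) : HQC := andH (.or (.not a) b) (.or (.not b) a)

variable {K : Kripke}

lemma sat_atom (L : List K.State → Set ℕ) (Pi : ℕ → ℕ → K.State) (cur : ℕ → K.State)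
    (i a π : ℕ) :
    HQC.Sat K L Pi cur i (.atom a π) ↔ a ∈ L ((List.range (i+1)).map (Pi π)) := Iff.rfl

lemma sat_not (L : List K.State → Set ℕ) (Pi : ℕ → ℕ → K.State) (cur : ℕ → K.State)
    (i : ℕ) (φ : HQC) :
    HQC.Sat K L Pi cur i (.not φ) ↔ ¬ HQC.Sat K L Pi cur i φ := Iff.rfl

lemma sat_or (L : List K.State → Set ℕ) (Pi : ℕ → ℕ → K.State) (cur : ℕ → K.State)
    (i : ℕ) (φ₁ φ₂ : HQC) :
    HQC.Sat K L Pi cur i (.or φ₁ φ₂) ↔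
      HQC.Sat K L Pi cur i φ₁ ∨ HQC.Sat K L Pi cur i φ₂ := Iff.rfl

lemma sat_next (L : List K.State → Set ℕ) (Pi : ℕ → ℕ → K.State) (cur : ℕ → K.State)
    (i : ℕ) (φ : HQC) :
    HQC.Sat K L Pi cur i (.next φ) ↔ HQC.Sat K L Pi cur (i+1) φ := Iff.rfl

lemma sat_ex (L : List K.State → Set ℕ) (Pi : ℕ → ℕ → K.State) (cur : ℕ → K.State)
    (i π : ℕ) (φ : HQC) :
    HQC.Sat K L Pi cur i (.ex π φ) ↔
      ∃ p : ℕ → K.State, K.PathFrom (cur i) p ∧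
        HQC.Sat K L (Function.update Pi π p) p i φ := Iff.rfl

lemma sat_pex (L : List K.State → Set ℕ) (Pi : ℕ → ℕ → K.State) (cur : ℕ → K.State)
    (i q : ℕ) (φ : HQC) :
    HQC.Sat K L Pi cur i (.pex q φ) ↔
      ∃ L' : List K.State → Set ℕ,
        (∀ w, ∀ b, b ≠ q → (b ∈ L' w ↔ b ∈ L w)) ∧
        HQC.Sat K L' Pi cur i φ := Iff.rfl

lemma sat_xuntil (L : List K.State → Set ℕ) (Pi : ℕ → ℕ → K.State) (cur : ℕ → K.State)
    (i : ℕ) (φ₁ φ₂ : HQC) :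
    HQC.Sat K L Pi cur i (.xuntil φ₁ φ₂) ↔
      ∃ k, i ≤ k ∧ HQC.Sat K L Pi cur k φ₂ ∧
        ∀ j, i ≤ j → j < k → HQC.Sat K L Pi cur j φ₁ := Iff.rfl

lemma sat_tt (L : List K.State → Set ℕ) (Pi : ℕ → ℕ → K.State) (cur : ℕ → K.State) (i : ℕ) :
    HQC.Sat K L Pi cur i tt := by
  rw [tt, sat_or, sat_not]
  tauto

lemma sat_andH (L : List K.State → Set ℕ) (Pi : ℕ → ℕ → K.State)
    (cur : ℕ → K.State) (i : ℕ) (a b : HQC) :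
    HQC.Sat K L Pi cur i (andH a b) ↔ HQC.Sat K L Pi cur i a ∧ HQC.Sat K L Pi cur i b := by
  rw [andH, sat_not, sat_or, sat_not, sat_not]
  tauto

lemma sat_FH (L : List K.State → Set ℕ) (Pi : ℕ → ℕ → K.State)
    (cur : ℕ → K.State) (i : ℕ) (χ : HQC) :
    HQC.Sat K L Pi cur i (FH χ) ↔ ∃ k, i ≤ k ∧ HQC.Sat K L Pi cur k χ := by
  rw [FH, sat_xuntil]
  constructor
  · rintro ⟨k, hk, h, -⟩; exact ⟨k, hk, h⟩
  · rintro ⟨k, hk, h⟩; exact ⟨k, hk, h, fun j _ _ => sat_tt L Pi cur j⟩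

lemma sat_GH (L : List K.State → Set ℕ) (Pi : ℕ → ℕ → K.State)
    (cur : ℕ → K.State) (i : ℕ) (χ : HQC) :
    HQC.Sat K L Pi cur i (GH χ) ↔ ∀ k, i ≤ k → HQC.Sat K L Pi cur k χ := by
  rw [GH, sat_not, sat_FH]
  constructor
  · intro h k hk
    by_contra hc
    exact h ⟨k, hk, (sat_not L Pi cur k χ).mpr hc⟩
  · rintro h ⟨k, hk, hc⟩
    exact ((sat_not L Pi cur k χ).mp hc) (h k hk)

lemma sat_iffH (L : List K.State → Set ℕ) (Pi : ℕ → ℕ → K.State)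
    (cur : ℕ → K.State) (i : ℕ) (a b : HQC) :
    HQC.Sat K L Pi cur i (iffH a b) ↔
      (HQC.Sat K L Pi cur i a ↔ HQC.Sat K L Pi cur i b) := by
  rw [iffH, sat_andH, sat_or, sat_or, sat_not, sat_not]
  tauto

/-- Temporal-guardedness is monotone. -/
lemma guarded_true_of_guarded {φ : HQC} : ∀ b, φ.Guarded b → φ.Guarded true := by
  induction φ with
  | atom a π => intro b _; trivial
  | not φ ih => intro b h; exact ih b h
  | or φ₁ φ₂ ih₁ ih₂ => intro b h; exact ⟨ih₁ b h.1, ih₂ b h.2⟩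
  | next φ ih => intro b h; exact ⟨rfl, ih b h.2⟩
  | xuntil φ₁ φ₂ ih₁ ih₂ => intro b h; exact ⟨rfl, ih₁ b h.2.1, ih₂ b h.2.2⟩
  | ex π φ ih => intro b h; exact h
  | pex q φ ih => intro b h; exact ih b h

/-! ### The separating HyperQCTL* sentence -/

/-- "There is a path and a proposition `1` holding at exactly the even
positions of that path such that `0` holds at some even position." -/
def φeven : HQC :=
  .ex 0 (.pex 1 (andH (.atom 1 0)
    (andH (GH (iffH (.atom 1 0) (.not (.next (.atom 1 0)))))
      (FH (andH (.atom 1 0) (.atom 0 0))))))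

lemma φeven_sentence : φeven.Sentence := by
  constructor
  · decide
  · simp [φeven, andH, GH, FH, iffH, tt, HQC.Guarded]

lemma Kw_seqLabel'_range (n k : ℕ) :
    (Kw n).seqLabel' (List.range (k+1)) = if k = n then {0} else ∅ := by
  have : (List.range (k+1) : List ℕ) = (List.range (k+1)).map id := by simp
  rw [this, seqLabel'_pfx]
  rfl

lemma φeven_iff (n : ℕ) : (Kw n).ModelsQ φeven ↔ Even n := by
  unfold Kripke.ModelsQ φeven
  rw [sat_ex]
  constructor
  · rintro ⟨p, hp, h⟩
    rw [sat_pex] at h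
    obtain ⟨L', hL', h⟩ := h
    rw [sat_andH] at h
    obtain ⟨h1, h⟩ := h
    rw [sat_andH] at h
    obtain ⟨h2, h3⟩ := h
    rw [sat_GH] at h2
    rw [sat_FH] at h3
    have hp' : ∀ i, p i = i := by
      simpa using (Kw_pathFrom 0 p).mp hp
    have hread : ∀ k, (List.range (k+1)).map (Function.update (fun _ _ => (Kw n).init) 0 p 0)
        = List.range (k+1) := by
      intro k
      rw [Function.update_self]
      exact map_range_self hp'
    set Q : ℕ → Prop := fun k => 1 ∈ L' (List.range (k+1)) with hQ
    have hQ1 : Q 0 := by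
      rw [sat_atom, hread 0] at h1; exact h1
    have hQalt : ∀ k, Q k ↔ ¬ Q (k+1) := by
      intro k
      have := h2 k (Nat.zero_le k)
      rw [sat_iffH, sat_atom, sat_not, sat_next, sat_atom, hread k, hread (k+1)] at this
      exact this
    have hQeven : ∀ k, Q k ↔ Even k := by
      intro k
      induction k with
      | zero => simp [hQ1]
      | succ m ih =>
          rw [Nat.even_add_one, ← ih]
          have := hQalt m
          tauto
    obtain ⟨k, -, hk⟩ := h3
    rw [sat_andH, sat_atom, sat_atom, hread k] at hk
    obtain ⟨hk1, hk2⟩ := hk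
    have : (0:ℕ) ∈ (Kw n).seqLabel' (List.range (k+1)) := by
      rw [← hL' _ 0 (by norm_num)]
      exact hk2
    rw [Kw_seqLabel'_range] at this
    have hkn : k = n := by
      by_contra hc; simp [hc] at this
    subst hkn
    exact (hQeven k).mp hk1
  · intro hn
    refine ⟨id, ⟨rfl, fun i => rfl⟩, ?_⟩
    rw [sat_pex]
    refine ⟨fun w => if Odd w.length then insert 1 ((Kw n).seqLabel' w)
      else ((Kw n).seqLabel' w) \ {1}, ?_, ?_⟩
    · intro w b hb
      by_cases hw : Odd w.length <;> simp [hw, hb]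
    · have hread : ∀ k, (List.range (k+1)).map (Function.update (fun _ _ => (Kw n).init) 0 id 0)
          = List.range (k+1) := by
        intro k
        rw [Function.update_self]
        simp
      have hQ : ∀ k, (1:ℕ) ∈ (if Odd (List.range (k+1) : List ℕ).length
          then insert 1 ((Kw n).seqLabel' (List.range (k+1)))
          else ((Kw n).seqLabel' (List.range (k+1))) \ {1}) ↔ Even k := by
        intro k
        rw [List.length_range]
        by_cases hk : Even k
        · have : Odd (k+1) := Even.add_one hk
          simp [this, hk]
        · have : ¬ Odd (k+1) := by simp [Nat.odd_add_one, hk]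
          simp [this, hk]
      rw [sat_andH, sat_andH, sat_atom, sat_GH, sat_FH, hread 0]
      refine ⟨?_, ?_, ?_⟩
      · exact (hQ 0).mpr (Even.zero)
      · intro k _
        rw [sat_iffH, sat_atom, sat_not, sat_next, sat_atom, hread k, hread (k+1)]
        rw [hQ k, hQ (k+1)]
        rw [Nat.even_add_one]
        tauto
      · refine ⟨n, Nat.zero_le n, ?_⟩
        rw [sat_andH, sat_atom, sat_atom, hread n]
        constructor
        · exact (hQ n).mpr hn
        · have h0 : (0:ℕ) ∈ (Kw n).seqLabel' (List.range (n+1)) := by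
            rw [Kw_seqLabel'_range]; simp
          have h1 : Odd (n+1) := Even.add_one hn
          simp [List.length_range, h1, h0]
  
end Sep
namespace Sep

/-- Part 2: no MPL[E] sentence is equivalent to `φeven`. -/
theorem part2 :
    ∃ φ : HQC, φ.Sentence ∧
      ¬ ∃ ψ : MPLE, ψ.Closed ∧ ∀ K : Kripke, (K.ModelsM ψ ↔ K.ModelsQ φ) := by
  refine ⟨φeven, φeven_sentence, ?_⟩
  rintro ⟨ψ, hclosed, hequiv⟩
  set d := mdepth ψ with hd
  set T : ℕ := 2 ^ d with hT
  have hT1 : 1 ≤ T := Nat.one_le_two_pow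
  set N : ℕ := 2 * T + 1 with hN
  set N' : ℕ := 2 * T + 2 with hN'
  -- the two models agree on ψ by EF
  have hEv : Ev N (fun _ => 0) (fun _ => False) ψ ↔ Ev N' (fun _ => 0) (fun _ => False) ψ := by
    apply EF 1 le_rfl ψ ∅ (fun _ => 0) (fun _ => 0) (fun _ => False) N N'
    · rw [hclosed.1]
    · intro p hp q hq
      simp only [PP, Finset.image_empty, Finset.mem_insert, Finset.mem_singleton] at hp hq
      have hTd : 2 ^ mdepth ψ * 1 = T := by rw [hT, hd]; ring
      rw [hTd]
      rcases hp with rfl | rfl | h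
      · rcases hq with rfl | rfl | h
        · exact ⟨by omega, by omega⟩
        · exact ⟨by omega, by omega⟩
        · simp at h
      · rcases hq with rfl | rfl | h
        · exact ⟨by omega, by omega⟩
        · exact ⟨by omega, by omega⟩
        · simp at h
      · simp at h
  -- transfer to the Kripke structures
  have hM : ∀ m, (Kw m).ModelsM ψ ↔ Ev (m+1) (fun _ => 0) (fun _ => False) ψ := by
    intro m
    apply Ev_correct m ψ (fun _ => 0) (fun _ => False)
    · intro x; rfl
    · intro X
      ext l
      exact ⟨fun h => absurd h (Set.notMem_empty l), fun h => h.1.elim⟩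
  have h1 := (hequiv (Kw (N - 1))).symm
  have h2 := (hequiv (Kw (N' - 1))).symm
  rw [φeven_iff] at h1 h2
  rw [hM, show N - 1 + 1 = N by omega] at h1
  rw [hM, show N' - 1 + 1 = N' by omega] at h2
  rw [hEv] at h1
  rw [← h2] at h1
  -- N - 1 = 2T is even, N' - 1 = 2T + 1 is odd
  have he : Even (N - 1) := ⟨T, by omega⟩
  have ho : ¬ Even (N' - 1) := by
    rintro ⟨k, hk⟩
    omega
  exact ho (h1.mp he)

end Sep
namespace Sep

/-! ### Part 1: translating MPL[E] into HyperQCTL* -/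

/-- A bound on the atomic propositions used in an MPL[E] formula. -/
def propBound : MPLE → ℕ
  | .patom a _ => a + 1
  | .lt _ _ => 0
  | .eq _ _ => 0
  | .mem _ _ => 0
  | .eqlevel _ _ => 0
  | .not φ => propBound φ
  | .or φ₁ φ₂ => max (propBound φ₁) (propBound φ₂)
  | .exFO _ φ => propBound φ
  | .exSO _ φ => propBound φ

/-- Fresh proposition marking "the value of FO variable x is the empty prefix". -/
def ep (N x : ℕ) : ℕ := N + 1 + 2 * x
/-- Fresh proposition marking exactly the (nonempty) prefix assigned to x. -/
def qp (N x : ℕ) : ℕ := N + 2 + 2 * x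
/-- Path variable used for SO variable X. -/
def pv (X : ℕ) : ℕ := X + 2

lemma ep_lt (N x : ℕ) : N < ep N x := by unfold ep; omega
lemma qp_lt (N x : ℕ) : N < qp N x := by unfold qp; omega
lemma ep_ne_qp (N x y : ℕ) : ep N x ≠ qp N y := by unfold ep qp; omega
lemma ep_inj {N x y : ℕ} (h : ep N x = ep N y) : x = y := by unfold ep at h; omega
lemma qp_inj {N x y : ℕ} (h : qp N x = qp N y) : x = y := by unfold qp at h; omega
lemma ep_ne_rp (N x : ℕ) : ep N x ≠ N := by unfold ep; omega
lemma qp_ne_rp (N x : ℕ) : qp N x ≠ N := by unfold qp; omega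
lemma pv_ne_zero (X : ℕ) : pv X ≠ 0 := by unfold pv; omega
lemma pv_ne_one (X : ℕ) : pv X ≠ 1 := by unfold pv; omega
lemma pv_inj {X Y : ℕ} (h : pv X = pv Y) : X = Y := by unfold pv at h; omega

/-- Reads the `ep` bit (at the prefix `[init]`). -/
def EBIT (N x : ℕ) : HQC := .ex 0 (.atom (ep N x) 0)
/-- "Some nonempty path prefix is marked by `qp N x`." -/
def SOME (N x : ℕ) : HQC := .ex 0 (FH (.atom (qp N x) 0))
/-- "At least two distinct nonempty path prefixes are marked by `qp N x`." -/
def TWO (N x : ℕ) : HQC :=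
  .ex 0 (.ex 1 (.pex N (andH
    (FH (andH (.atom (qp N x) 0) (.atom N 0)))
    (FH (andH (.atom (qp N x) 1) (.not (.atom N 1)))))))
/-- "`ep`/`qp` encode a single path prefix for the FO variable x." -/
def SINGLE (N x : ℕ) : HQC :=
  .or (andH (EBIT N x) (.not (SOME N x)))
    (andH (.not (EBIT N x)) (andH (SOME N x) (.not (TWO N x))))

/-- Nonempty prefixes of paths of `K` from the initial state. -/
def NPP (K : Kripke) (w : List K.State) : Prop := w ≠ [] ∧ K.IsPathPrefix w

variable {K : Kripke}

lemma NPP_pfx {p : ℕ → K.State} (hp : K.IsPath p) (k : ℕ) :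
    NPP K ((List.range (k+1)).map p) :=
  ⟨by simp, isPathPrefix_pfx K hp _⟩

lemma isPathPrefix_nil (K : Kripke) : K.IsPathPrefix ([] : List K.State) :=
  ⟨somePath K K.init, somePath_path K K.init, by simp⟩

lemma NPP_init (K : Kripke) : NPP K [K.init] := by
  have : ([K.init] : List K.State) = (List.range 1).map (somePath K K.init) := by
    simp [List.range_succ]
    rfl
  rw [this]
  exact NPP_pfx (somePath_path K K.init) 0

/-- Destructure a nonempty path prefix. -/
lemma NPP_elim {w : List K.State} (h : NPP K w) :
    ∃ (p : ℕ → K.State) (k : ℕ), K.IsPath p ∧ w = (List.range (k+1)).map p := by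
  obtain ⟨hne, p, hp, hw⟩ := h
  refine ⟨p, w.length - 1, hp, ?_⟩
  have : w.length - 1 + 1 = w.length := by
    have : w.length ≠ 0 := by simpa using hne
    omega
  rw [this]
  exact hw

lemma read_one (p : ℕ → K.State) :
    (List.range 1).map p = [p 0] := by simp [List.range_succ]

lemma sat_EBIT (L : List K.State → Set ℕ) (Pi : ℕ → ℕ → K.State) (cur : ℕ → K.State)
    (hcur : cur 0 = K.init) (N x : ℕ) :
    HQC.Sat K L Pi cur 0 (EBIT N x) ↔ ep N x ∈ L [K.init] := by
  rw [EBIT, sat_ex]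
  constructor
  · rintro ⟨p, hp, h⟩
    rw [sat_atom] at h
    rw [Function.update_self] at h
    rw [read_one p, hp.1, hcur] at h
    exact h
  · intro h
    refine ⟨somePath K (cur 0), somePath_path K (cur 0), ?_⟩
    rw [sat_atom, Function.update_self, read_one]
    rw [show somePath K (cur 0) 0 = cur 0 from rfl, hcur]
    exact h

lemma sat_SOME (L : List K.State → Set ℕ) (Pi : ℕ → ℕ → K.State) (cur : ℕ → K.State)
    (hcur : cur 0 = K.init) (N x : ℕ) :
    HQC.Sat K L Pi cur 0 (SOME N x) ↔ ∃ w, NPP K w ∧ qp N x ∈ L w := by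
  rw [SOME, sat_ex]
  constructor
  · rintro ⟨p, hp, h⟩
    rw [sat_FH] at h
    obtain ⟨k, -, h⟩ := h
    rw [sat_atom, Function.update_self] at h
    have hp' : K.IsPath p := by rw [Kripke.IsPath, ← hcur]; exact hp
    exact ⟨_, NPP_pfx hp' k, h⟩
  · rintro ⟨w, hw, hmem⟩
    obtain ⟨p, k, hp, rfl⟩ := NPP_elim hw
    refine ⟨p, by rw [hcur]; exact hp, ?_⟩
    rw [sat_FH]
    exact ⟨k, Nat.zero_le k, by rw [sat_atom, Function.update_self]; exact hmem⟩

lemma sat_TWO (L : List K.State → Set ℕ) (Pi : ℕ → ℕ → K.State) (cur : ℕ → K.State)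
    (hcur : cur 0 = K.init) (N x : ℕ) :
    HQC.Sat K L Pi cur 0 (TWO N x) ↔
      ∃ w₁ w₂, NPP K w₁ ∧ NPP K w₂ ∧ qp N x ∈ L w₁ ∧ qp N x ∈ L w₂ ∧ w₁ ≠ w₂ := by
  rw [TWO, sat_ex]
  constructor
  · rintro ⟨p, hp, h⟩
    rw [sat_ex] at h
    obtain ⟨p', hp', h⟩ := h
    rw [sat_pex] at h
    obtain ⟨L₃, hL₃, h⟩ := h
    rw [sat_andH, sat_FH, sat_FH] at h
    obtain ⟨⟨k, -, h1⟩, ⟨k', -, h2⟩⟩ := h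
    rw [sat_andH, sat_atom, sat_atom] at h1
    rw [sat_andH, sat_atom, sat_not, sat_atom] at h2
    have hup0 : (Function.update (Function.update Pi 0 p) 1 p') 0 = p := by
      rw [Function.update_of_ne (by norm_num), Function.update_self]
    have hup1 : (Function.update (Function.update Pi 0 p) 1 p') 1 = p' := by
      rw [Function.update_self]
    rw [hup0] at h1
    rw [hup1] at h2
    have hpP : K.IsPath p := by rw [Kripke.IsPath, ← hcur]; exact hp
    have hp'P : K.IsPath p' := by
      rw [Kripke.IsPath, ← hpP.1]; exact hp'
    refine ⟨(List.range (k+1)).map p, (List.range (k'+1)).map p',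
      NPP_pfx hpP k, NPP_pfx hp'P k', ?_, ?_, ?_⟩
    · rw [← hL₃ _ _ (qp_ne_rp N x)]; exact h1.1
    · rw [← hL₃ _ _ (qp_ne_rp N x)]; exact h2.1
    · intro hc
      apply h2.2
      rw [← hc]
      exact h1.2
  · classical
    rintro ⟨w₁, w₂, hw₁, hw₂, hm₁, hm₂, hne⟩
    obtain ⟨p, k, hp, rfl⟩ := NPP_elim hw₁
    obtain ⟨p', k', hp', rfl⟩ := NPP_elim hw₂
    refine ⟨p, by rw [hcur]; exact hp, ?_⟩
    rw [sat_ex]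
    refine ⟨p', by rw [hp.1]; exact hp', ?_⟩
    rw [sat_pex]
    refine ⟨fun w => if w = (List.range (k+1)).map p then L w ∪ {N} else L w \ {N}, ?_, ?_⟩
    · intro w b hb
      by_cases hw : w = (List.range (k+1)).map p <;>
        simp [hw, hb, Set.mem_union, Set.mem_singleton_iff, Set.mem_diff]
    · have hup0 : (Function.update (Function.update Pi 0 p) 1 p') 0 = p := by
        rw [Function.update_of_ne (by norm_num), Function.update_self]
      have hup1 : (Function.update (Function.update Pi 0 p) 1 p') 1 = p' := by
        rw [Function.update_self]
      rw [sat_andH, sat_FH, sat_FH]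
      constructor
      · refine ⟨k, Nat.zero_le k, ?_⟩
        rw [sat_andH, sat_atom, sat_atom, hup0]
        simp only [if_pos rfl]
        exact ⟨Set.mem_union_left _ hm₁, Set.mem_union_right _ rfl⟩
      · refine ⟨k', Nat.zero_le k', ?_⟩
        rw [sat_andH, sat_atom, sat_not, sat_atom, hup1]
        have hne' : (List.range (k'+1)).map p' ≠ (List.range (k+1)).map p :=
          fun hc => hne hc.symm
        rw [if_neg hne']
        constructor
        · exact ⟨hm₂, by simpa using qp_ne_rp N x⟩
        · simp

end Sep
namespace Sep

/-- The translation of MPL[E] into HyperQCTL*. -/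
def Tr (N : ℕ) : MPLE → HQC
  | .patom a x => andH (.not (EBIT N x))
      (.ex 0 (FH (andH (.atom (qp N x) 0) (.atom a 0))))
  | .lt x y => .or (andH (EBIT N x) (.not (EBIT N y)))
      (andH (.not (EBIT N x)) (andH (.not (EBIT N y))
        (.ex 0 (FH (andH (.atom (qp N x) 0) (.next (FH (.atom (qp N y) 0))))))))
  | .eq x y => .or (andH (EBIT N x) (EBIT N y))
      (.ex 0 (FH (andH (.atom (qp N x) 0) (.atom (qp N y) 0))))
  | .mem x X => .or (EBIT N x) (.ex 0 (FH (.atom (qp N x) (pv X))))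
  | .eqlevel x y => .or (andH (EBIT N x) (EBIT N y))
      (.ex 0 (.ex 1 (FH (andH (.atom (qp N x) 0) (.atom (qp N y) 1)))))
  | .not φ => .not (Tr N φ)
  | .or φ₁ φ₂ => .or (Tr N φ₁) (Tr N φ₂)
  | .exFO x φ => .pex (ep N x) (.pex (qp N x) (andH (SINGLE N x) (Tr N φ)))
  | .exSO X φ => .ex (pv X) (Tr N φ)

/-! #### Structural properties of the translation -/

lemma guarded_EBIT (N x : ℕ) (b : Bool) : (EBIT N x).Guarded b := by
  simp [EBIT, HQC.Guarded]

lemma guarded_SOME (N x : ℕ) (b : Bool) : (SOME N x).Guarded b := by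
  simp [SOME, FH, tt, HQC.Guarded]

lemma guarded_TWO (N x : ℕ) (b : Bool) : (TWO N x).Guarded b := by
  simp [TWO, andH, FH, tt, HQC.Guarded]

lemma guarded_SINGLE (N x : ℕ) (b : Bool) : (SINGLE N x).Guarded b := by
  simp [SINGLE, andH, HQC.Guarded, guarded_EBIT, guarded_SOME, guarded_TWO]

lemma free_SINGLE (N x : ℕ) : (SINGLE N x).free = ∅ := by
  simp only [SINGLE, EBIT, SOME, TWO, FH, tt, andH, HQC.free]
  decide

lemma guarded_Tr (N : ℕ) (φ : MPLE) : ∀ b, (Tr N φ).Guarded b := by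
  induction φ with
  | patom a x => intro b; simp [Tr, andH, FH, tt, HQC.Guarded, guarded_EBIT]
  | lt x y => intro b; simp [Tr, andH, FH, tt, HQC.Guarded, guarded_EBIT]
  | eq x y => intro b; simp [Tr, andH, FH, tt, HQC.Guarded, guarded_EBIT]
  | mem x X => intro b; simp [Tr, andH, FH, tt, HQC.Guarded, guarded_EBIT]
  | eqlevel x y => intro b; simp [Tr, andH, FH, tt, HQC.Guarded, guarded_EBIT]
  | not φ ih => intro b; exact ih b
  | or φ₁ φ₂ ih₁ ih₂ => intro b; exact ⟨ih₁ b, ih₂ b⟩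
  | exFO x φ ih =>
      intro b
      exact ⟨guarded_SINGLE N x b, ih b⟩
  | exSO X φ ih => intro b; exact ih true

lemma free_Tr (N : ℕ) (φ : MPLE) : (Tr N φ).free ⊆ φ.freeSO.image pv := by
  induction φ with
  | patom a x =>
      intro v hv
      simp only [Tr, HQC.free, EBIT, FH, tt, andH, Finset.mem_union,
        Finset.mem_sdiff, Finset.mem_singleton] at hv
      tauto
  | lt x y =>
      intro v hv
      simp only [Tr, HQC.free, EBIT, FH, tt, andH, Finset.mem_union,
        Finset.mem_sdiff, Finset.mem_singleton] at hv
      tauto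
  | eq x y =>
      intro v hv
      simp only [Tr, HQC.free, EBIT, FH, tt, andH, Finset.mem_union,
        Finset.mem_sdiff, Finset.mem_singleton] at hv
      tauto
  | mem x X =>
      intro v hv
      simp only [Tr, HQC.free, EBIT, FH, tt, andH, Finset.mem_union,
        Finset.mem_sdiff, Finset.mem_singleton] at hv
      have : v = pv X := by tauto
      subst this
      simp [MPLE.freeSO]
  | eqlevel x y =>
      intro v hv
      simp only [Tr, HQC.free, EBIT, FH, tt, andH, Finset.mem_union,
        Finset.mem_sdiff, Finset.mem_singleton] at hv
      tauto
  | not φ ih => simpa [Tr, HQC.free, MPLE.freeSO] using ih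
  | or φ₁ φ₂ ih₁ ih₂ =>
      intro v hv
      simp only [Tr, HQC.free, MPLE.freeSO] at hv ⊢
      rw [Finset.image_union]
      rcases Finset.mem_union.mp hv with h | h
      · exact Finset.mem_union_left _ (ih₁ h)
      · exact Finset.mem_union_right _ (ih₂ h)
  | exFO x φ ih =>
      intro v hv
      have hv' : v ∈ (SINGLE N x).free ∪ (Tr N φ).free := hv
      rw [free_SINGLE, Finset.empty_union] at hv'
      simpa [MPLE.freeSO] using ih hv'
  | exSO X φ ih =>
      intro v hv
      simp only [Tr, HQC.free, MPLE.freeSO] at hv ⊢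
      rcases Finset.mem_sdiff.mp hv with ⟨hv1, hv2⟩
      obtain ⟨Y, hY, rfl⟩ := Finset.mem_image.mp (ih hv1)
      refine Finset.mem_image.mpr ⟨Y, Finset.mem_sdiff.mpr ⟨hY, fun hc => ?_⟩, rfl⟩
      exact hv2 (Finset.mem_singleton.mpr (congrArg pv (Finset.mem_singleton.mp hc)))

end Sep
namespace Sep

variable {K : Kripke}

lemma sat_ex0FH (L : List K.State → Set ℕ) (Pi : ℕ → ℕ → K.State) (cur : ℕ → K.State)
    (hcur : cur 0 = K.init) (χ : HQC) :
    HQC.Sat K L Pi cur 0 (.ex 0 (FH χ)) ↔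
      ∃ p, K.IsPath p ∧ ∃ k, HQC.Sat K L (Function.update Pi 0 p) p k χ := by
  rw [sat_ex]
  constructor
  · rintro ⟨p, hp, h⟩
    rw [sat_FH] at h
    obtain ⟨k, -, h⟩ := h
    exact ⟨p, by rw [Kripke.IsPath, ← hcur]; exact hp, k, h⟩
  · rintro ⟨p, hp, k, h⟩
    exact ⟨p, by rw [hcur]; exact hp, (sat_FH _ _ _ _ _).mpr ⟨k, Nat.zero_le k, h⟩⟩

lemma seqLabel_eq (K : Kripke) : K.seqLabel = K.seqLabel' := rfl

lemma length_pfx (p : ℕ → K.State) (m : ℕ) : ((List.range m).map p).length = m := by simp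

/-- Destructured form of a nonempty path prefix, with the length data. -/
lemma NPP_elim' {w : List K.State} (h : NPP K w) :
    ∃ (p : ℕ → K.State) (k : ℕ), K.IsPath p ∧ w = (List.range (k+1)).map p ∧
      w.length = k + 1 := by
  obtain ⟨p, k, hp, hw⟩ := NPP_elim h
  exact ⟨p, k, hp, hw, by rw [hw]; simp⟩

lemma Tr_correct (K : Kripke) (N : ℕ) :
    ∀ (φ : MPLE), propBound φ ≤ N →
    ∀ (L : List K.State → Set ℕ) (Pi : ℕ → ℕ → K.State) (cur : ℕ → K.State)
      (V₁ : ℕ → List K.State) (V₂ : ℕ → Set (List K.State)),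
      cur 0 = K.init →
      (∀ w, NPP K w → ∀ b, b < N → (b ∈ L w ↔ b ∈ K.seqLabel' w)) →
      (∀ x, x ∈ φ.freeFO → K.IsPathPrefix (V₁ x) ∧ (ep N x ∈ L [K.init] ↔ V₁ x = []) ∧
        (∀ w, NPP K w → (qp N x ∈ L w ↔ w = V₁ x))) →
      (∀ X, X ∈ φ.freeSO → K.IsPath (Pi (pv X)) ∧ V₂ X = K.PrefixSet (Pi (pv X))) →
      (MPLE.Sat K V₁ V₂ φ ↔ HQC.Sat K L Pi cur 0 (Tr N φ)) := by
  intro φ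
  induction φ with
  | patom a x =>
      intro hN L Pi cur V₁ V₂ hcur hA hfo hso
      obtain ⟨hpre, hebit, hq⟩ := hfo x (by simp [MPLE.freeFO])
      have haN : a < N := by simp [propBound] at hN; omega
      simp only [MPLE.Sat, Tr, sat_andH, sat_not, sat_atom,
        sat_EBIT L Pi cur hcur, sat_ex0FH L Pi cur hcur, Function.update_self]
      constructor
      · intro h
        have hx0 : V₁ x ≠ [] := by
          intro hc
          rw [hc] at h
          simp [Kripke.seqLabel] at h
        obtain ⟨p, k, hp, hVx, hlen⟩ := NPP_elim' ⟨hx0, hpre⟩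
        refine ⟨fun hc => hx0 (hebit.mp hc), p, hp, k, ?_, ?_⟩
        · exact (hq _ (NPP_pfx hp k)).mpr hVx.symm
        · rw [hA _ (NPP_pfx hp k) a haN, ← hVx, ← seqLabel_eq]
          exact h
      · rintro ⟨hne, p, hp, k, h1, h2⟩
        have hVx := (hq _ (NPP_pfx hp k)).mp h1
        rw [hA _ (NPP_pfx hp k) a haN] at h2
        rw [seqLabel_eq, ← hVx]
        exact h2
  | lt x y =>
      intro hN L Pi cur V₁ V₂ hcur hA hfo hso
      obtain ⟨hprex, hebitx, hqx⟩ := hfo x (by simp [MPLE.freeFO])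
      obtain ⟨hprey, hebity, hqy⟩ := hfo y (by simp [MPLE.freeFO])
      simp only [MPLE.Sat, Tr, sat_or, sat_andH, sat_not, sat_atom, sat_next, sat_FH,
        sat_EBIT L Pi cur hcur, sat_ex0FH L Pi cur hcur, Function.update_self]
      constructor
      · rintro ⟨hpfx, hne⟩
        have hy0 : V₁ y ≠ [] := by
          intro hc
          rw [hc, List.prefix_nil] at hpfx
          exact hne (hpfx.trans hc.symm)
        by_cases hx0 : V₁ x = []
        · exact Or.inl ⟨hebitx.mpr hx0, fun hc => hy0 (hebity.mp hc)⟩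
        · refine Or.inr ⟨fun hc => hx0 (hebitx.mp hc), fun hc => hy0 (hebity.mp hc), ?_⟩
          obtain ⟨p, k', hp, hVy, hleny⟩ := NPP_elim' ⟨hy0, hprey⟩
          have hVx : V₁ x = (List.range (V₁ x).length).map p := by
            apply prefix_pfx_eq
            rw [← hVy]
            exact hpfx
          have hmx : (V₁ x).length ≠ 0 := by simpa using hx0
          have hlenx : (V₁ x).length ≤ k' + 1 := by
            have := hpfx.length_le
            omega
          have hlt : (V₁ x).length < k' + 1 := by
            rcases Nat.lt_or_ge (V₁ x).length (k' + 1) with h | h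
            · exact h
            · exfalso
              apply hne
              apply hpfx.eq_of_length
              omega
          refine ⟨p, hp, (V₁ x).length - 1, ?_, k', by omega, ?_⟩
          · apply (hqx _ (NPP_pfx hp ((V₁ x).length - 1))).mpr
            rw [show (V₁ x).length - 1 + 1 = (V₁ x).length by omega]
            exact hVx.symm
          · exact (hqy _ (NPP_pfx hp k')).mpr hVy.symm
      · rintro (⟨he1, he2⟩ | ⟨hne1, hne2, p, hp, k, h1, k', hk', h2⟩)
        · have hx0 := hebitx.mp he1
          have hy0 : V₁ y ≠ [] := fun hc => he2 (hebity.mpr hc)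
          constructor
          · rw [hx0]; exact List.nil_prefix
          · rw [hx0]; exact fun hc => hy0 hc.symm
        · have hVx := (hqx _ (NPP_pfx hp k)).mp h1
          have hVy := (hqy _ (NPP_pfx hp k')).mp h2
          constructor
          · rw [← hVx, ← hVy]
            exact pfx_prefix p (by omega)
          · intro hc
            have := congrArg List.length hc
            rw [← hVx, ← hVy] at this
            simp at this
            omega
  | eq x y =>
      intro hN L Pi cur V₁ V₂ hcur hA hfo hso
      obtain ⟨hprex, hebitx, hqx⟩ := hfo x (by simp [MPLE.freeFO])
      obtain ⟨hprey, hebity, hqy⟩ := hfo y (by simp [MPLE.freeFO])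
      simp only [MPLE.Sat, Tr, sat_or, sat_andH, sat_atom,
        sat_EBIT L Pi cur hcur, sat_ex0FH L Pi cur hcur, Function.update_self]
      constructor
      · intro h
        by_cases hx0 : V₁ x = []
        · exact Or.inl ⟨hebitx.mpr hx0, hebity.mpr (h ▸ hx0)⟩
        · obtain ⟨p, k, hp, hVx, hlen⟩ := NPP_elim' ⟨hx0, hprex⟩
          refine Or.inr ⟨p, hp, k, ?_, ?_⟩
          · exact (hqx _ (NPP_pfx hp k)).mpr hVx.symm
          · exact (hqy _ (NPP_pfx hp k)).mpr (by rw [← h]; exact hVx.symm)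
      · rintro (⟨he1, he2⟩ | ⟨p, hp, k, h1, h2⟩)
        · rw [hebitx.mp he1, hebity.mp he2]
        · rw [← (hqx _ (NPP_pfx hp k)).mp h1, ← (hqy _ (NPP_pfx hp k)).mp h2]
  | mem x X =>
      intro hN L Pi cur V₁ V₂ hcur hA hfo hso
      obtain ⟨hprex, hebitx, hqx⟩ := hfo x (by simp [MPLE.freeFO])
      obtain ⟨hpX, hV2⟩ := hso X (by simp [MPLE.freeSO])
      have hupd : ∀ p : ℕ → K.State, Function.update Pi 0 p (pv X) = Pi (pv X) :=
        fun p => Function.update_of_ne (pv_ne_zero X) _ _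
      simp only [MPLE.Sat, Tr, sat_or, sat_atom,
        sat_EBIT L Pi cur hcur, sat_ex0FH L Pi cur hcur, hupd, hV2]
      constructor
      · intro h
        rw [Kripke.PrefixSet, Set.mem_setOf_eq] at h
        by_cases hx0 : V₁ x = []
        · exact Or.inl (hebitx.mpr hx0)
        · have hmx : (V₁ x).length ≠ 0 := by simpa using hx0
          refine Or.inr ⟨somePath K K.init, somePath_path K K.init, (V₁ x).length - 1, ?_⟩
          apply (hqx _ (NPP_pfx hpX ((V₁ x).length - 1))).mpr
          rw [show (V₁ x).length - 1 + 1 = (V₁ x).length by omega, ← h]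
      · rintro (he | ⟨pd, hpd, k, h⟩)
        · rw [hebitx.mp he, Kripke.PrefixSet, Set.mem_setOf_eq]
          simp
        · have hVx := (hqx _ (NPP_pfx hpX k)).mp h
          rw [Kripke.PrefixSet, Set.mem_setOf_eq, ← hVx, length_pfx]
  | eqlevel x y =>
      intro hN L Pi cur V₁ V₂ hcur hA hfo hso
      obtain ⟨hprex, hebitx, hqx⟩ := hfo x (by simp [MPLE.freeFO])
      obtain ⟨hprey, hebity, hqy⟩ := hfo y (by simp [MPLE.freeFO])
      have hup0 : ∀ p p' : ℕ → K.State,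
          (Function.update (Function.update Pi 0 p) 1 p') 0 = p := by
        intro p p'
        rw [Function.update_of_ne (by norm_num), Function.update_self]
      have hup1 : ∀ p p' : ℕ → K.State,
          (Function.update (Function.update Pi 0 p) 1 p') 1 = p' :=
        fun p p' => Function.update_self _ _ _
      simp only [MPLE.Sat, Tr, sat_or, sat_andH, sat_atom, sat_FH, sat_ex,
        sat_EBIT L Pi cur hcur, hup0, hup1, hcur, Function.update_self]
      constructor
      · intro h
        by_cases hx0 : V₁ x = []
        · refine Or.inl ⟨hebitx.mpr hx0, hebity.mpr ?_⟩
          rw [← List.length_eq_zero_iff, ← h, hx0]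
          rfl
        · have hy0 : V₁ y ≠ [] := by
            intro hc
            apply hx0
            rw [← List.length_eq_zero_iff, h, hc]
            rfl
          obtain ⟨p, k, hp, hVx, hlenx⟩ := NPP_elim' ⟨hx0, hprex⟩
          obtain ⟨p', k', hp', hVy, hleny⟩ := NPP_elim' ⟨hy0, hprey⟩
          have hkk : k = k' := by omega
          subst hkk
          refine Or.inr ⟨p, hp, p', by rw [hp.1]; exact hp', k, Nat.zero_le k, ?_, ?_⟩
          · exact (hqx _ (NPP_pfx hp k)).mpr hVx.symm
          · exact (hqy _ (NPP_pfx hp' k)).mpr hVy.symm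
      · rintro (⟨he1, he2⟩ | ⟨p, hp, p', hp', k, -, h1, h2⟩)
        · rw [hebitx.mp he1, hebity.mp he2]
        · have hpP : K.IsPath p := hp
          have hp'P : K.IsPath p' := by rw [Kripke.IsPath, ← hpP.1]; exact hp'
          have hVx := (hqx _ (NPP_pfx hpP k)).mp h1
          have hVy := (hqy _ (NPP_pfx hp'P k)).mp h2
          rw [← hVx, ← hVy, length_pfx, length_pfx]
  | not φ ih =>
      intro hN L Pi cur V₁ V₂ hcur hA hfo hso
      simp only [MPLE.Sat, Tr]
      rw [sat_not, ih hN L Pi cur V₁ V₂ hcur hA hfo hso]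
  | or φ₁ φ₂ ih₁ ih₂ =>
      intro hN L Pi cur V₁ V₂ hcur hA hfo hso
      simp only [MPLE.Sat, Tr]
      have hN₁ : propBound φ₁ ≤ N := by simp [propBound] at hN; omega
      have hN₂ : propBound φ₂ ≤ N := by simp [propBound] at hN; omega
      rw [sat_or,
        ih₁ hN₁ L Pi cur V₁ V₂ hcur hA
          (fun x hx => hfo x (Finset.mem_union_left _ hx))
          (fun X hX => hso X (Finset.mem_union_left _ hX)),
        ih₂ hN₂ L Pi cur V₁ V₂ hcur hA
          (fun x hx => hfo x (Finset.mem_union_right _ hx))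
          (fun X hX => hso X (Finset.mem_union_right _ hX))]
  | exSO X φ ih =>
      intro hN L Pi cur V₁ V₂ hcur hA hfo hso
      simp only [MPLE.Sat, Tr]
      rw [sat_ex]
      constructor
      · rintro ⟨pp, hpp, hsat⟩
        refine ⟨pp, by rw [hcur]; exact hpp, ?_⟩
        rw [← ih hN L (Function.update Pi (pv X) pp) pp V₁
          (Function.update V₂ X (K.PrefixSet pp)) hpp.1 hA hfo ?_]
        · exact hsat
        · intro Y hY
          by_cases hXY : Y = X
          · subst hXY
            rw [Function.update_self, Function.update_self]
            exact ⟨hpp, rfl⟩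
          · rw [Function.update_of_ne (fun hc => hXY (pv_inj hc)),
              Function.update_of_ne hXY]
            exact hso Y (Finset.mem_sdiff.mpr ⟨hY, by simp [hXY]⟩)
      · rintro ⟨pp, hppfrom, hsat⟩
        have hpp : K.IsPath pp := by rw [Kripke.IsPath, ← hcur]; exact hppfrom
        refine ⟨pp, hpp, ?_⟩
        rw [ih hN L (Function.update Pi (pv X) pp) pp V₁
          (Function.update V₂ X (K.PrefixSet pp)) hpp.1 hA hfo ?_]
        · exact hsat
        · intro Y hY
          by_cases hXY : Y = X
          · subst hXY
            rw [Function.update_self, Function.update_self]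
            exact ⟨hpp, rfl⟩
          · rw [Function.update_of_ne (fun hc => hXY (pv_inj hc)),
              Function.update_of_ne hXY]
            exact hso Y (Finset.mem_sdiff.mpr ⟨hY, by simp [hXY]⟩)
  | exFO x φ ih =>
      intro hN L Pi cur V₁ V₂ hcur hA hfo hso
      classical
      have hN' : propBound φ ≤ N := hN
      have hepq : ep N x ≠ qp N x := ep_ne_qp N x x
      -- the three environment conditions, given a labeling marking `l`
      have hcond : ∀ (L₂ : List K.State → Set ℕ) (l : List K.State),
          K.IsPathPrefix l →
          (∀ w b, b ≠ ep N x → b ≠ qp N x → (b ∈ L₂ w ↔ b ∈ L w)) →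
          (ep N x ∈ L₂ [K.init] ↔ l = []) →
          (∀ w, NPP K w → (qp N x ∈ L₂ w ↔ w = l)) →
          (∀ w, NPP K w → ∀ b, b < N → (b ∈ L₂ w ↔ b ∈ K.seqLabel' w)) ∧
          (∀ y, y ∈ φ.freeFO →
            K.IsPathPrefix (Function.update V₁ x l y) ∧
            (ep N y ∈ L₂ [K.init] ↔ Function.update V₁ x l y = []) ∧
            (∀ w, NPP K w → (qp N y ∈ L₂ w ↔ w = Function.update V₁ x l y))) := by
        intro L₂ l hl hb hebit₂ hq₂
        constructor
        · intro w hw b hbN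
          rw [hb w b (by have := ep_lt N x; omega) (by have := qp_lt N x; omega)]
          exact hA w hw b hbN
        · intro y hy
          by_cases hxy : y = x
          · subst hxy
            rw [Function.update_self]
            exact ⟨hl, hebit₂, hq₂⟩
          · rw [Function.update_of_ne hxy]
            obtain ⟨h1, h2, h3⟩ := hfo y (Finset.mem_sdiff.mpr ⟨hy, by simp [hxy]⟩)
            refine ⟨h1, ?_, ?_⟩
            · rw [hb _ _ (fun hc => hxy (ep_inj hc)) (ep_ne_qp N y x)]
              exact h2
            · intro w hw
              rw [hb _ _ (Ne.symm (ep_ne_qp N x y)) (fun hc => hxy (qp_inj hc))]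
              exact h3 w hw
      simp only [MPLE.Sat, Tr]
      rw [sat_pex]
      constructor
      · rintro ⟨l, hl, hsat⟩
        set L₁ : List K.State → Set ℕ :=
          fun w => if l = [] then L w ∪ {ep N x} else L w \ {ep N x} with hL₁
        set L₂ : List K.State → Set ℕ :=
          fun w => if w = l then L₁ w ∪ {qp N x} else L₁ w \ {qp N x} with hL₂
        have hA1 : ∀ w b, b ∈ L₁ w ↔
            ((l = [] ∧ (b ∈ L w ∨ b = ep N x)) ∨ (l ≠ [] ∧ b ∈ L w ∧ b ≠ ep N x)) := by
          intro w b
          rw [hL₁]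
          by_cases hc : l = [] <;> simp [hc] <;> tauto
        have hA2 : ∀ w b, b ∈ L₂ w ↔
            ((w = l ∧ (b ∈ L₁ w ∨ b = qp N x)) ∨ (w ≠ l ∧ b ∈ L₁ w ∧ b ≠ qp N x)) := by
          intro w b
          rw [hL₂]
          by_cases hw : w = l <;> simp [hw] <;> tauto
        have hb : ∀ w b, b ≠ ep N x → b ≠ qp N x → (b ∈ L₂ w ↔ b ∈ L w) := by
          intro w b h1 h2
          rw [hA2, hA1]
          by_cases hw : w = l <;> by_cases hc : l = [] <;> tauto
        have hep : ∀ w, ep N x ∈ L₂ w ↔ l = [] := by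
          intro w
          rw [hA2, hA1]
          by_cases hw : w = l <;> by_cases hc : l = [] <;> tauto
        have hqm : ∀ w, qp N x ∈ L₂ w ↔ w = l := by
          intro w
          rw [hA2, hA1]
          have hqpe : qp N x ≠ ep N x := hepq.symm
          by_cases hw : w = l <;> by_cases hc : l = [] <;> tauto
        refine ⟨L₁, ?_, ?_⟩
        · intro w b hbe
          rw [hA1]
          by_cases hc : l = [] <;> tauto
        rw [sat_pex]
        refine ⟨L₂, ?_, ?_⟩
        · intro w b hbq
          rw [hA2]
          by_cases hw : w = l <;> tauto
        rw [sat_andH]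
        obtain ⟨hA₂, hfo₂⟩ := hcond L₂ l hl hb (hep _) (fun w _ => hqm w)
        constructor
        · rw [SINGLE, sat_or]
          by_cases hc : l = []
          · left
            rw [sat_andH, sat_not, sat_EBIT L₂ Pi cur hcur, sat_SOME L₂ Pi cur hcur]
            refine ⟨(hep _).mpr hc, ?_⟩
            rintro ⟨w, hw, hmem⟩
            exact hw.1 (((hqm w).mp hmem).trans hc)
          · right
            rw [sat_andH, sat_not, sat_EBIT L₂ Pi cur hcur, sat_andH,
              sat_SOME L₂ Pi cur hcur, sat_not, sat_TWO L₂ Pi cur hcur]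
            refine ⟨fun hc2 => hc ((hep _).mp hc2),
              ⟨l, ⟨hc, hl⟩, (hqm l).mpr rfl⟩, ?_⟩
            rintro ⟨w₁, w₂, hw₁, hw₂, hm₁, hm₂, hne⟩
            exact hne (((hqm w₁).mp hm₁).trans ((hqm w₂).mp hm₂).symm)
        · exact (ih hN' L₂ Pi cur (Function.update V₁ x l) V₂ hcur hA₂ hfo₂ hso).mp hsat
      · rintro ⟨L₁, hagree₁, h⟩
        rw [sat_pex] at h
        obtain ⟨L₂, hagree₂, h⟩ := h
        rw [sat_andH] at h
        obtain ⟨hSING, hTr⟩ := h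
        have hb : ∀ w b, b ≠ ep N x → b ≠ qp N x → (b ∈ L₂ w ↔ b ∈ L w) :=
          fun w b h1 h2 => (hagree₂ w b h2).trans (hagree₁ w b h1)
        rw [SINGLE, sat_or] at hSING
        have key : ∃ l, K.IsPathPrefix l ∧ (ep N x ∈ L₂ [K.init] ↔ l = []) ∧
            (∀ w, NPP K w → (qp N x ∈ L₂ w ↔ w = l)) := by
          rcases hSING with hL | hR
          · rw [sat_andH, sat_not, sat_EBIT L₂ Pi cur hcur, sat_SOME L₂ Pi cur hcur] at hL
            obtain ⟨he, hns⟩ := hL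
            refine ⟨[], isPathPrefix_nil K, by simp [he], ?_⟩
            intro w hw
            constructor
            · intro hm
              exact absurd ⟨w, hw, hm⟩ hns
            · intro hc
              exact absurd hc hw.1
          · rw [sat_andH, sat_not, sat_EBIT L₂ Pi cur hcur, sat_andH,
              sat_SOME L₂ Pi cur hcur, sat_not, sat_TWO L₂ Pi cur hcur] at hR
            obtain ⟨hne, ⟨w₀, hw₀, hm₀⟩, hnt⟩ := hR
            refine ⟨w₀, hw₀.2, iff_of_false hne hw₀.1, ?_⟩
            intro w hw
            constructor
            · intro hm
              by_contra hc
              exact hnt ⟨w, w₀, hw, hw₀, hm, hm₀, hc⟩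
            · rintro rfl
              exact hm₀
        obtain ⟨l, hl, hebit₂, hq₂⟩ := key
        obtain ⟨hA₂, hfo₂⟩ := hcond L₂ l hl hb hebit₂ hq₂
        exact ⟨l, hl, (ih hN' L₂ Pi cur (Function.update V₁ x l) V₂ hcur hA₂ hfo₂ hso).mpr hTr⟩

end Sep
namespace Sep

theorem part1 : ∀ ψ : MPLE, ψ.Closed →
    ∃ φ : HQC, φ.Sentence ∧ ∀ K : Kripke, (K.ModelsM ψ ↔ K.ModelsQ φ) := by
  intro ψ hcl
  refine ⟨Tr (propBound ψ) ψ, ⟨?_, guarded_Tr _ _ false⟩, ?_⟩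
  · have h := free_Tr (propBound ψ) ψ
    rw [hcl.2] at h
    simp only [Finset.image_empty] at h
    exact Finset.subset_empty.mp h
  · intro K
    unfold Kripke.ModelsM Kripke.ModelsQ
    apply Tr_correct K (propBound ψ) ψ le_rfl
    · rfl
    · intro w hw b hb
      exact Iff.rfl
    · intro x hx
      rw [hcl.1] at hx
      exact absurd hx (Finset.notMem_empty x)
    · intro X hX
      rw [hcl.2] at hX
      exact absurd hX (Finset.notMem_empty X)

end Sep
/-- **HyperQCTL* is strictly more expressive than MPL[E]** over Kripke
structures. -/
theorem hyperQCTLstar_strictly_more_expressive_than_MPLE :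
    (∀ ψ : MPLE, ψ.Closed →
        ∃ φ : HQC, φ.Sentence ∧ ∀ K : Kripke, (K.ModelsM ψ ↔ K.ModelsQ φ)) ∧
    (∃ φ : HQC, φ.Sentence ∧
        ¬ ∃ ψ : MPLE, ψ.Closed ∧
            ∀ K : Kripke, (K.ModelsM ψ ↔ K.ModelsQ φ)) := by
  exact ⟨Sep.part1, Sep.part2⟩
end
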